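/- arXiv:2410.18885 — 8 statements merged into one kernel-verified Lean document; each statement's English description precedes it below -/
import Mathlib

section
/- For every finite simple graph G = (V,E) on n ≥ 2 vertices, there exists a partition {E_1, …, E_h} of E with h ≤ ⌈log₂ n⌉ that induces an (h, 1/2)-expander hierarchy of G: for every level ℓ ≤ h and every connected component Γ of the graph G_{≤ℓ} = (V, E_1 ∪ … ∪ E_ℓ), the edge set E_ℓ ∩ E(Γ) is (1/2)-expanding in Γ, i.e., for every S ⊆ V(Γ), the number of edges of E_1 ∪ … ∪ E_ℓ with one endpoint in S and the other in V(Γ) ∖ S is at least (1/2)·min{Deg_{E_ℓ}(S), Deg_{E_ℓ}(V(Γ) ∖ S)}. -/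
/-- `degX X S` is the `X`-volume of `S`: the number of incidences between
vertices of `S` and edges of `X`, i.e. `Σ_{v ∈ S} Deg_X(v)`. -/
noncomputable def degX {V : Type*} (X : Set (Sym2 V)) (S : Set V) : ℕ :=
  {p : V × Sym2 V | p.1 ∈ S ∧ p.2 ∈ X ∧ p.1 ∈ p.2}.ncard

/-- `crossEdges Ec A B` is the set of edges of `Ec` with one endpoint in `A`
and the other endpoint in `B`. -/
def crossEdges {V : Type*} (Ec : Set (Sym2 V)) (A B : Set V) : Set (Sym2 V) :=
  {e | e ∈ Ec ∧ ∃ u v, e = s(u, v) ∧ u ∈ A ∧ v ∈ B}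

namespace ExpHier

set_option linter.unusedSectionVars false

variable {V : Type} [Fintype V]

/-- `p` is a partition function: `p v` is the class of `v`. -/
def IsPartFun (p : V → Set V) : Prop :=
  (∀ v, v ∈ p v) ∧ ∀ u v : V, u ∈ p v → p u = p v

/-- the two endpoints of `e` lie in the same class of `p`. -/
def pSame (p : V → Set V) (e : Sym2 V) : Prop :=
  Sym2.lift ⟨fun u v => p u = p v, fun _ _ => propext eq_comm⟩ e

@[simp] lemma pSame_mk (p : V → Set V) (u v : V) : pSame p s(u,v) ↔ p u = p v := Iff.rfl

/-- edges of `G` inside a class of `p` crossing `q`. -/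
def W (G : SimpleGraph V) (p q : V → Set V) : Set (Sym2 V) :=
  {e | e ∈ G.edgeSet ∧ pSame p e ∧ ¬ pSame q e}

/-- candidate refinements of `p` with classes of size at most `c`. -/
def Cand (p : V → Set V) (c : ℕ) : Set (V → Set V) :=
  {q | IsPartFun q ∧ (∀ v, q v ⊆ p v) ∧ ∀ v, (q v).ncard ≤ c}

lemma cand_nonempty {p : V → Set V} (hp : IsPartFun p) {c : ℕ} (hc : 1 ≤ c) :
    (Cand p c).Nonempty := by
  refine ⟨fun v => {v}, ⟨fun v => rfl, fun u v h => by
      simp only [Set.mem_singleton_iff] at h; rw [h]⟩,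
    fun v => Set.singleton_subset_iff.mpr (hp.1 v), fun v => by simp [hc]⟩

open Classical in
/-- a refinement of `p` into classes of size at most `c` minimizing the number
of crossing edges. -/
noncomputable def refineMin (G : SimpleGraph V) (p : V → Set V) (c : ℕ) : V → Set V :=
  if h : (Cand p c).Nonempty then
    (Set.exists_min_image (Cand p c) (fun q => (W G p q).ncard) (Set.toFinite _) h).choose
  else p

lemma refineMin_spec (G : SimpleGraph V) {p : V → Set V} {c : ℕ} (h : (Cand p c).Nonempty) :
    refineMin G p c ∈ Cand p c ∧
      ∀ q ∈ Cand p c, (W G p (refineMin G p c)).ncard ≤ (W G p q).ncard := by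
  classical
  rw [refineMin, dif_pos h]
  exact (Set.exists_min_image (Cand p c) (fun q => (W G p q).ncard)
    (Set.toFinite _) h).choose_spec

/-- The chain of partitions: `chain G hh k` has classes of size at most `2^(hh-k)`. -/
noncomputable def chain (G : SimpleGraph V) (hh : ℕ) : ℕ → (V → Set V)
  | 0 => fun _ => Set.univ
  | (k+1) => refineMin G (chain G hh k) (2 ^ (hh - k - 1))

variable (G : SimpleGraph V)

lemma chain_isPartFun (hh k : ℕ) : IsPartFun (chain G hh k) := by
  induction k with
  | zero => exact ⟨fun v => Set.mem_univ v, fun u v _ => rfl⟩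
  | succ k ih =>
    exact (refineMin_spec G (cand_nonempty ih Nat.one_le_two_pow)).1.1

lemma chain_succ_mem (hh k : ℕ) :
    chain G hh (k+1) ∈ Cand (chain G hh k) (2 ^ (hh - k - 1)) :=
  (refineMin_spec G (cand_nonempty (chain_isPartFun G hh k) Nat.one_le_two_pow)).1

lemma chain_min (hh k : ℕ) :
    ∀ q ∈ Cand (chain G hh k) (2 ^ (hh - k - 1)),
      (W G (chain G hh k) (chain G hh (k+1))).ncard ≤ (W G (chain G hh k) q).ncard :=
  (refineMin_spec G (cand_nonempty (chain_isPartFun G hh k) Nat.one_le_two_pow)).2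

lemma chain_size (hh : ℕ) (hn : Fintype.card V ≤ 2 ^ hh) (k : ℕ) (v : V) :
    (chain G hh k v).ncard ≤ 2 ^ (hh - k) := by
  induction k with
  | zero =>
    simpa [chain, Set.ncard_univ, Nat.card_eq_fintype_card] using hn
  | succ k ih =>
    calc (chain G hh (k+1) v).ncard ≤ 2 ^ (hh - k - 1) := (chain_succ_mem G hh k).2.2 v
      _ = 2 ^ (hh - (k+1)) := by rw [Nat.sub_sub]

lemma chain_subset (hh k : ℕ) (v : V) : chain G hh (k+1) v ⊆ chain G hh k v :=
  (chain_succ_mem G hh k).2.1 v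

lemma chain_eq_mono (hh : ℕ) {k : ℕ} {u v : V}
    (h : chain G hh (k+1) u = chain G hh (k+1) v) :
    chain G hh k u = chain G hh k v := by
  have hv : v ∈ chain G hh k u :=
    chain_subset G hh k u (h ▸ (chain_isPartFun G hh (k+1)).1 v)
  exact ((chain_isPartFun G hh k).2 v u hv).symm

lemma chain_eq_le (hh : ℕ) {k' k : ℕ} (hkk : k' ≤ k) {u v : V}
    (h : chain G hh k u = chain G hh k v) :
    chain G hh k' u = chain G hh k' v := by
  induction k, hkk using Nat.le_induction with
  | base => exact h
  | succ k hk ih => exact ih (chain_eq_mono G hh h)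

lemma pSame_le (hh : ℕ) {k' k : ℕ} (hkk : k' ≤ k) {e : Sym2 V}
    (h : pSame (chain G hh k) e) : pSame (chain G hh k') e := by
  induction e using Sym2.ind with
  | _ u v => exact chain_eq_le G hh hkk h

lemma chain_singleton (hh : ℕ) (hn : Fintype.card V ≤ 2 ^ hh) {k : ℕ} (hk : hh ≤ k) (v : V) :
    chain G hh k v = {v} := by
  have h1 : (chain G hh k v).ncard ≤ 1 := by
    simpa [Nat.sub_eq_zero_of_le hk] using chain_size G hh hn k v
  have hv : v ∈ chain G hh k v := (chain_isPartFun G hh k).1 v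
  refine Set.eq_singleton_iff_unique_mem.mpr ⟨hv, fun w hw => ?_⟩
  by_contra hne
  have : 1 < (chain G hh k v).ncard :=
    (Set.one_lt_ncard_iff (Set.toFinite _)).mpr ⟨w, v, hw, hv, hne⟩
  omega

/-- The level-`ℓ` edges (0-indexed; level `ℓ` of `Fin hh`). -/
noncomputable def Elvl (hh ℓ : ℕ) : Set (Sym2 V) :=
  W G (chain G hh (hh - 1 - ℓ)) (chain G hh (hh - 1 - ℓ + 1))

/-- The union of levels `0..ℓ`. -/
def Lset (hh ℓ : ℕ) : Set (Sym2 V) :=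
  {e | e ∈ G.edgeSet ∧ pSame (chain G hh (hh - 1 - ℓ)) e}

lemma exists_flip {P : ℕ → Prop} (k₀ k₁ : ℕ) (h01 : k₀ ≤ k₁) (h0 : P k₀) (h1 : ¬ P k₁) :
    ∃ m, k₀ ≤ m ∧ m < k₁ ∧ P m ∧ ¬ P (m+1) := by
  induction k₁ with
  | zero =>
    have : k₀ = 0 := by omega
    exact absurd (this ▸ h0) h1
  | succ k ih =>
    have hne : k₀ ≠ k + 1 := fun h => h1 (h ▸ h0)
    by_cases hP : P k
    · exact ⟨k, by omega, by omega, hP, h1⟩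
    · obtain ⟨m, hm1, hm2, hm3, hm4⟩ := ih (by omega) hP
      exact ⟨m, hm1, by omega, hm3, hm4⟩

lemma prefix_eq (hh : ℕ) (hn : Fintype.card V ≤ 2 ^ hh) (ℓ : Fin hh) :
    (⋃ i : Fin hh, ⋃ (_ : i ≤ ℓ), Elvl G hh i.val) = Lset G hh ℓ.val := by
  ext e
  simp only [Set.mem_iUnion]
  constructor
  · rintro ⟨i, hi, he⟩
    obtain ⟨he1, he2, -⟩ := he
    refine ⟨he1, pSame_le G hh ?_ he2⟩
    have : i.val ≤ ℓ.val := hi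
    omega
  · intro he
    induction e using Sym2.ind with
    | _ u v =>
      obtain ⟨he1, he2⟩ := he
      have huv : u ≠ v := (G.mem_edgeSet.mp he1).ne
      have hℓ := ℓ.isLt
      have hlast : ¬ (chain G hh hh u = chain G hh hh v) := by
        rw [chain_singleton G hh hn le_rfl u, chain_singleton G hh hn le_rfl v]
        simpa using huv
      obtain ⟨m, hm1, hm2, hm3, hm4⟩ :=
        exists_flip (P := fun k => chain G hh k u = chain G hh k v)
          (hh - 1 - ℓ.val) hh (by omega) he2 hlast
      refine ⟨⟨hh - 1 - m, by omega⟩, ?_, ?_⟩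
      · show hh - 1 - m ≤ ℓ.val
        omega
      · have hmm : hh - 1 - (hh - 1 - m) = m := by omega
        show s(u,v) ∈ Elvl G hh (hh - 1 - m)
        rw [Elvl, hmm]
        exact ⟨he1, hm3, hm4⟩

lemma reach_same (hh k : ℕ) {u v : V}
    (h : (SimpleGraph.fromEdgeSet (Lset G hh k)).Reachable u v) :
    chain G hh (hh - 1 - k) u = chain G hh (hh - 1 - k) v := by
  obtain ⟨w⟩ := h
  induction w with
  | nil => rfl
  | cons h _ ih =>
    have h1 := ((SimpleGraph.fromEdgeSet_adj _).mp h).1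
    exact (h1.2 : pSame _ _).trans ih

lemma supp_same (hh k : ℕ) (Γ : (SimpleGraph.fromEdgeSet (Lset G hh k)).ConnectedComponent)
    {u v : V} (hu : u ∈ Γ.supp) (hv : v ∈ Γ.supp) :
    chain G hh (hh - 1 - k) u = chain G hh (hh - 1 - k) v := by
  rw [SimpleGraph.ConnectedComponent.mem_supp_iff] at hu hv
  exact reach_same G hh k (SimpleGraph.ConnectedComponent.exact (hu.trans hv.symm))

lemma supp_other (hh k : ℕ) (Γ : (SimpleGraph.fromEdgeSet (Lset G hh k)).ConnectedComponent)
    {u w : V} (hu : u ∈ Γ.supp) (he : s(u,w) ∈ Lset G hh k) : w ∈ Γ.supp := by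
  have hne : u ≠ w := (G.mem_edgeSet.mp he.1).ne
  have hadj : (SimpleGraph.fromEdgeSet (Lset G hh k)).Adj u w :=
    (SimpleGraph.fromEdgeSet_adj _).mpr ⟨he, hne⟩
  rw [SimpleGraph.ConnectedComponent.mem_supp_iff] at hu ⊢
  rw [← hu]
  exact SimpleGraph.ConnectedComponent.sound hadj.symm.reachable

lemma crossEdges_comm (U : Set (Sym2 V)) (A B : Set V) :
    crossEdges U A B = crossEdges U B A := by
  ext e
  constructor <;> rintro ⟨he, u, v, rfl, h1, h2⟩ <;>
    exact ⟨he, v, u, Sym2.eq_swap.symm, h2, h1⟩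

lemma main (hh : ℕ) (hn : Fintype.card V ≤ 2 ^ hh) (ℓ : ℕ) (hℓ : ℓ < hh)
    (Γ : (SimpleGraph.fromEdgeSet (Lset G hh ℓ)).ConnectedComponent)
    {S : Set V} (hS : S ⊆ Γ.supp) (hcard : S.ncard ≤ 2 ^ ℓ) :
    degX (Elvl G hh ℓ) S ≤ 2 * (crossEdges (Lset G hh ℓ) S (Γ.supp \ S)).ncard := by
  classical
  set K := hh - 1 - ℓ with hK
  set p := chain G hh K with hp
  set q := chain G hh (K+1) with hq
  have hexp : 2 ^ (hh - K - 1) = 2 ^ ℓ := by congr 1; omega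
  -- the carved refinement
  set q' : V → Set V := fun v => if v ∈ S then S else q v \ S with hq'
  have hq'cand : q' ∈ Cand p (2 ^ (hh - K - 1)) := by
    refine ⟨⟨?_, ?_⟩, ?_, ?_⟩
    · intro v
      by_cases hv : v ∈ S <;> simp [hq', hv]
      exact (chain_isPartFun G hh (K+1)).1 v
    · intro u v hu
      by_cases hv : v ∈ S
      · simp only [hq', if_pos hv] at hu
        simp [hq', if_pos hu, if_pos hv]
      · simp only [hq', if_neg hv, Set.mem_diff] at hu
        have h3 : q u = q v := (chain_isPartFun G hh (K+1)).2 u v hu.1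
        simp only [hq', if_neg hu.2, if_neg hv, h3]
    · intro v
      by_cases hv : v ∈ S
      · simp only [hq', if_pos hv]
        intro s hs
        have h1 := supp_same G hh ℓ Γ (hS hs) (hS hv)
        rw [← hK, ← hp] at h1
        have : s ∈ p s := (chain_isPartFun G hh K).1 s
        rwa [h1] at this
      · simp only [hq', if_neg hv]
        exact Set.diff_subset.trans (chain_subset G hh K v)
    · intro v
      by_cases hv : v ∈ S
      · simpa [hq', if_pos hv, hexp] using hcard
      · simp only [hq', if_neg hv]
        calc (q v \ S).ncard ≤ (q v).ncard := Set.ncard_le_ncard Set.diff_subset (Set.toFinite _)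
          _ ≤ 2 ^ (hh - (K+1)) := chain_size G hh hn (K+1) v
          _ = 2 ^ (hh - K - 1) := by rw [Nat.sub_sub]
  have hmin : (W G p q).ncard ≤ (W G p q').ncard := chain_min G hh K q' hq'cand
  set D : Set (Sym2 V) := {e | e ∈ W G p q ∧ ∃ v ∈ S, v ∈ e} with hD
  set CR := crossEdges (Lset G hh ℓ) S (Γ.supp \ S) with hCR
  have hsub : W G p q' ⊆ CR ∪ (W G p q \ D) := by
    intro e
    induction e using Sym2.ind with
    | _ u w =>
      rintro ⟨he1, he2, he3⟩
      have huw : u ≠ w := (G.mem_edgeSet.mp he1).ne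
      by_cases hu : u ∈ S <;> by_cases hw : w ∈ S
      · exact absurd (show q' u = q' w by simp [hq', if_pos hu, if_pos hw]) he3
      · refine Or.inl ⟨⟨he1, he2⟩, u, w, rfl, hu, ?_, hw⟩
        exact supp_other G hh ℓ Γ (hS hu) ⟨he1, he2⟩
      · refine Or.inl ⟨⟨he1, he2⟩, w, u, Sym2.eq_swap.symm, hw, ?_, hu⟩
        exact supp_other G hh ℓ Γ (hS hw)
          (show s(w,u) ∈ Lset G hh ℓ by rw [Sym2.eq_swap]; exact ⟨he1, he2⟩)
      · refine Or.inr ⟨⟨he1, he2, fun hqe => ?_⟩, fun hmem => ?_⟩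
        · exact he3 (show q' u = q' w by
            simp only [hq', if_neg hu, if_neg hw]
            rw [show q u = q w from hqe])
        · obtain ⟨-, v, hvS, hv⟩ := hmem
          rw [Sym2.mem_iff] at hv
          rcases hv with rfl | rfl
          · exact hu hvS
          · exact hw hvS
  have hDW : D ⊆ W G p q := fun e he => he.1
  have h1 : (W G p q').ncard ≤ CR.ncard + (W G p q \ D).ncard :=
    le_trans (Set.ncard_le_ncard hsub (Set.toFinite _)) (Set.ncard_union_le _ _)
  have h2 : (W G p q \ D).ncard + D.ncard = (W G p q).ncard :=
    Set.ncard_diff_add_ncard_of_subset hDW (Set.toFinite _)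
  have hDcr : D.ncard ≤ CR.ncard := by omega
  -- now bound the degree by 2 * D.ncard
  have hdeg : degX (Elvl G hh ℓ) S ≤ 2 * D.ncard := by
    have hEW : Elvl G hh ℓ = W G p q := rfl
    rw [degX, hEW]
    set I : Set (V × Sym2 V) := {pa | pa.1 ∈ S ∧ pa.2 ∈ W G p q ∧ pa.1 ∈ pa.2} with hI
    rw [Set.ncard_eq_toFinset_card I (Set.toFinite I),
        Set.ncard_eq_toFinset_card D (Set.toFinite D)]
    set FI := (Set.toFinite I).toFinset with hFI
    set FD := (Set.toFinite D).toFinset with hFD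
    have himg : FI.image Prod.snd ⊆ FD := by
      intro e he
      rw [Finset.mem_image] at he
      obtain ⟨⟨v, e'⟩, hmem, rfl⟩ := he
      rw [hFI, Set.Finite.mem_toFinset] at hmem
      rw [hFD, Set.Finite.mem_toFinset]
      exact ⟨hmem.2.1, v, hmem.1, hmem.2.2⟩
    calc FI.card ≤ 2 * (FI.image Prod.snd).card := by
          refine Finset.card_le_mul_card_image _ 2 ?_
          intro b hb
          induction b using Sym2.ind with
          | _ u w =>
            have hsubp : FI.filter (fun x => x.2 = s(u,w)) ⊆ {(u, s(u,w)), (w, s(u,w))} := by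
              intro x hx
              rw [Finset.mem_filter, hFI, Set.Finite.mem_toFinset] at hx
              obtain ⟨⟨hx1, hx2, hx3⟩, hx4⟩ := hx
              rw [hx4, Sym2.mem_iff] at hx3
              obtain ⟨x1, x2⟩ := x
              simp only at hx4 hx3
              rcases hx3 with rfl | rfl <;> simp [hx4]
            exact (Finset.card_le_card hsubp).trans (by
              exact (Finset.card_insert_le _ _).trans (by simp))
      _ ≤ 2 * FD.card := Nat.mul_le_mul_left 2 (Finset.card_le_card himg)
  calc degX (Elvl G hh ℓ) S ≤ 2 * D.ncard := hdeg
    _ ≤ 2 * CR.ncard := Nat.mul_le_mul_left 2 hDcr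

lemma final (hh : ℕ) (hn : Fintype.card V ≤ 2 ^ hh) (ℓ : ℕ) (hℓ : ℓ < hh)
    (U : Set (Sym2 V)) (hU : U = Lset G hh ℓ)
    (Γ : (SimpleGraph.fromEdgeSet U).ConnectedComponent)
    (S : Set V) (hS : S ⊆ Γ.supp) :
    ((1:ℝ)/2) * min (degX (Elvl G hh ℓ) S : ℝ) (degX (Elvl G hh ℓ) (Γ.supp \ S) : ℝ)
      ≤ ((crossEdges U S (Γ.supp \ S)).ncard : ℝ) := by
  subst hU
  obtain ⟨v₀, hv₀⟩ := Γ.exists_rep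
  have hv₀s : v₀ ∈ Γ.supp := by
    rw [SimpleGraph.ConnectedComponent.mem_supp_iff]
    exact hv₀
  have hsuppsub : Γ.supp ⊆ chain G hh (hh - 1 - ℓ) v₀ := by
    intro u hu
    have h1 := supp_same G hh ℓ Γ hu hv₀s
    have h2 : u ∈ chain G hh (hh-1-ℓ) u := (chain_isPartFun G hh _).1 u
    rwa [h1] at h2
  have hsc : Γ.supp.ncard ≤ 2 ^ (ℓ+1) := by
    calc Γ.supp.ncard ≤ (chain G hh (hh-1-ℓ) v₀).ncard :=
          Set.ncard_le_ncard hsuppsub (Set.toFinite _)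
      _ ≤ 2 ^ (hh - (hh - 1 - ℓ)) := chain_size G hh hn _ v₀
      _ = 2 ^ (ℓ+1) := by congr 1; omega
  have hsum : (Γ.supp \ S).ncard + S.ncard = Γ.supp.ncard :=
    Set.ncard_diff_add_ncard_of_subset hS (Set.toFinite _)
  have hpow : 2 ^ (ℓ+1) = 2 ^ ℓ + 2 ^ ℓ := by rw [pow_succ]; ring
  rw [hpow] at hsc
  by_cases hSc : S.ncard ≤ 2 ^ ℓ
  · have hmain := main G hh hn ℓ hℓ Γ hS hSc
    have hmin := min_le_left (degX (Elvl G hh ℓ) S : ℝ) (degX (Elvl G hh ℓ) (Γ.supp \ S) : ℝ)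
    have hc : (degX (Elvl G hh ℓ) S : ℝ)
        ≤ 2 * ((crossEdges (Lset G hh ℓ) S (Γ.supp \ S)).ncard : ℝ) := by
      exact_mod_cast hmain
    linarith
  · have hTc : (Γ.supp \ S).ncard ≤ 2 ^ ℓ := by
      have h1 : 2 ^ ℓ < S.ncard := not_le.mp hSc
      omega
    have hmain := main G hh hn ℓ hℓ Γ Set.diff_subset hTc
    rw [Set.diff_diff_cancel_left hS, crossEdges_comm] at hmain
    have hmin := min_le_right (degX (Elvl G hh ℓ) S : ℝ) (degX (Elvl G hh ℓ) (Γ.supp \ S) : ℝ)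
    have hc : (degX (Elvl G hh ℓ) (Γ.supp \ S) : ℝ)
        ≤ 2 * ((crossEdges (Lset G hh ℓ) S (Γ.supp \ S)).ncard : ℝ) := by
      exact_mod_cast hmain
    linarith

end ExpHier

/-- Every graph on `n ≥ 2` vertices has an edge partition into
`h ≤ ⌈log₂ n⌉` levels inducing an `(h, 1/2)`-expander hierarchy. -/
theorem stmt_2 (V : Type) [Fintype V] (G : SimpleGraph V)
    (h2 : 2 ≤ Fintype.card V) :
    ∃ (h : ℕ) (E : Fin h → Set (Sym2 V)),
      h ≤ Nat.clog 2 (Fintype.card V) ∧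
      (⋃ i, E i) = G.edgeSet ∧
      (Pairwise fun i j => Disjoint (E i) (E j)) ∧
      ∀ ℓ : Fin h,
        ∀ Γ : (SimpleGraph.fromEdgeSet (⋃ i, ⋃ (_ : i ≤ ℓ), E i)).ConnectedComponent,
          ∀ S : Set V, S ⊆ Γ.supp →
            ((1 : ℝ) / 2) *
                min (degX (E ℓ) S : ℝ) (degX (E ℓ) (Γ.supp \ S) : ℝ) ≤
              ((crossEdges (⋃ i, ⋃ (_ : i ≤ ℓ), E i) S (Γ.supp \ S)).ncard : ℝ) := by
  classical
  set hh := Nat.clog 2 (Fintype.card V) with hhh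
  have hn : Fintype.card V ≤ 2 ^ hh := Nat.le_pow_clog one_lt_two _
  have hh1 : 1 ≤ hh := by
    by_contra hcon
    interval_cases hh
    · simp at hn; omega
  refine ⟨hh, fun ℓ => ExpHier.Elvl G hh ℓ.val, le_rfl, ?_, ?_, ?_⟩
  · -- union
    have hset : (⋃ i : Fin hh, ExpHier.Elvl G hh i.val) =
        ⋃ i : Fin hh, ⋃ (_ : i ≤ (⟨hh - 1, by omega⟩ : Fin hh)), ExpHier.Elvl G hh i.val := by
      ext e
      simp only [Set.mem_iUnion]
      constructor
      · rintro ⟨i, hi⟩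
        refine ⟨i, ?_, hi⟩
        show i.val ≤ hh - 1
        have := i.isLt
        omega
      · rintro ⟨i, -, hi⟩
        exact ⟨i, hi⟩
    rw [hset, ExpHier.prefix_eq G hh hn ⟨hh - 1, by omega⟩]
    have h0 : hh - 1 - (hh - 1) = 0 := by omega
    rw [ExpHier.Lset, h0]
    ext e
    induction e using Sym2.ind with
    | _ u v => simp [ExpHier.pSame_mk, ExpHier.chain]
  · -- pairwise disjoint
    have key : ∀ i j : ℕ, i < j → j < hh →
        Disjoint (ExpHier.Elvl G hh i) (ExpHier.Elvl G hh j) := by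
      intro i j hij hj
      rw [Set.disjoint_left]
      rintro e ⟨-, he2, -⟩ ⟨-, -, hn4⟩
      exact hn4 (ExpHier.pSame_le G hh (by omega) he2)
    intro i j hne
    rcases lt_or_gt_of_ne hne with h | h
    · exact key i.val j.val h j.isLt
    · exact (key j.val i.val h i.isLt).symm
  · -- expansion
    intro ℓ Γ S hS
    exact ExpHier.final G hh hn ℓ.val ℓ.isLt _ (ExpHier.prefix_eq G hh hn ℓ) Γ S hS
end

section
/- For every finite simple graph G = (V,E) on n ≥ 2 vertices, there exists a partition {V_1, …, V_h} of V with h ≤ ⌈log₂ n⌉ that induces an (h, 1)-vertex-expander hierarchy of G: for every level ℓ ≤ h and every connected component Γ of the subgraph G_{≤ℓ} induced on V_1 ∪ … ∪ V_ℓ, the set V_ℓ ∩ V(Γ) is 1-vertex-expanding in the induced subgraph G[Γ], i.e., for every vertex cut (L,S,R) of G[Γ], |S| ≥ min{|(V_ℓ ∩ V(Γ)) ∩ (L∪S)|, |(V_ℓ ∩ V(Γ)) ∩ (R∪S)|}. -/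
/-- `Γ` is (the vertex set of) a connected component of the subgraph of `G`
induced on `A`: it is a nonempty subset of `A`, connected in the induced sense,
and closed under adjacency within `A`. -/
def IsCompOf {V : Type*} (G : SimpleGraph V) (A Γ : Set V) : Prop :=
  Γ ⊆ A ∧ Γ.Nonempty ∧ (G.induce Γ).Connected ∧
    ∀ u ∈ Γ, ∀ v ∈ A, G.Adj u v → v ∈ Γ

/-- `X` is `φ`-vertex-expanding in the subgraph of `G` induced on the ground
set `A`: for every vertex cut `(L, S, R)` of `G[A]`,
`|S| ≥ φ · min{|X ∩ (L∪S)|, |X ∩ (R∪S)|}`. -/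
def IsVertexExpandingOn {V : Type*} (G : SimpleGraph V) (A X : Set V) (φ : ℝ) : Prop :=
  ∀ L S R : Set V, L ∪ S ∪ R = A →
    Disjoint L S → Disjoint L R → Disjoint S R →
    L.Nonempty → R.Nonempty →
    (∀ u ∈ L, ∀ v ∈ R, ¬ G.Adj u v) →
    φ * min ((X ∩ (L ∪ S)).ncard : ℝ) ((X ∩ (R ∪ S)).ncard : ℝ) ≤ (S.ncard : ℝ)

/-!
Peel the graph from the top. With `k = ⌈log₂ n⌉`, round `j` replaces each current component `Γ`
by `Γ \ X`, where `X ⊆ Γ` is a minimum-size set whose removal leaves components of at most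
`2 ^ (k - j)` vertices; the sets removed in the rounds are the levels from the top down, and the
components left after `k - 1` rounds have at most two vertices and form the bottom level.

Minimality gives expansion. If `|Γ| ≤ 2B` and a cut `(L, S, R)` of `Γ` with `|L| ≤ |R|` had
`|S| < |X ∩ (L ∪ S)|`, then `(X \ L) ∪ (S \ X)` would be a smaller separator: each component of
its complement lies either in `L`, which has at most `B` vertices, or in a component of `Γ \ X`.
A connected set of at most two vertices has no vertex cut at all.
-/

namespace VertexExpanderHierarchy

open SimpleGraph

variable {V : Type*} {G : SimpleGraph V}

theorem subset_or_subset_of_connected {W L R : Set V} (hconn : (G.induce W).Connected)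
    (hW : W ⊆ L ∪ R) (hno : ∀ u ∈ L, ∀ v ∈ R, ¬ G.Adj u v) : W ⊆ L ∨ W ⊆ R := by
  by_contra! h
  obtain ⟨⟨x, hxW, hxR⟩, ⟨y, hyW, hyL⟩⟩ := And.intro
    (Set.not_subset.mp h.2) (Set.not_subset.mp h.1)
  obtain ⟨p⟩ := hconn.preconnected ⟨x, hxW⟩ ⟨y, hyW⟩
  obtain ⟨d, -, hdL, hdL'⟩ := p.exists_boundary_dart {z | (z : V) ∈ L}
    ((hW hxW).resolve_right hxR) hyL
  exact hno _ hdL _ ((hW d.snd.2).resolve_left hdL') d.adj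

theorem IsCompOf.subset_of_connected {A Γ W : Set V} (hΓ : IsCompOf G A Γ)
    (hconn : (G.induce W).Connected) (hWA : W ⊆ A) (hmeet : (Γ ∩ W).Nonempty) : W ⊆ Γ := by
  refine (subset_or_subset_of_connected hconn (R := A \ Γ) (fun w hw => ?_) ?_).resolve_right ?_
  · by_cases h : w ∈ Γ
    · exact Or.inl h
    · exact Or.inr ⟨hWA hw, h⟩
  · exact fun u hu v hv huv => hv.2 (hΓ.2.2.2 u hu v hv.1 huv)
  · obtain ⟨w, hwΓ, hwW⟩ := hmeet
    exact fun h => (h hwW).2 hwΓ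

theorem IsCompOf.eq_of_inter_nonempty {A Γ Γ' : Set V} (hΓ : IsCompOf G A Γ)
    (hΓ' : IsCompOf G A Γ') (hmeet : (Γ ∩ Γ').Nonempty) : Γ = Γ' :=
  (IsCompOf.subset_of_connected hΓ' hΓ.2.2.1 hΓ.1 (Set.inter_comm Γ Γ' ▸ hmeet)).antisymm
    (IsCompOf.subset_of_connected hΓ hΓ'.2.2.1 hΓ'.1 hmeet)

theorem exists_isCompOf_superset [Finite V] {A W : Set V} (hconn : (G.induce W).Connected)
    (hWA : W ⊆ A) : ∃ Γ, IsCompOf G A Γ ∧ W ⊆ Γ := by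
  obtain ⟨Γ, hWΓ, ⟨hΓA, hΓconn, -⟩, hmax⟩ :=
    Finite.exists_le_maximal (p := fun s => s ⊆ A ∧ (G.induce s).Connected ∧ W ⊆ s)
      ⟨hWA, hconn, le_rfl⟩
  refine ⟨Γ, ⟨hΓA, hΓconn.nonempty.elim fun x => ⟨x, x.2⟩, hΓconn, fun u hu v hv huv => ?_⟩, hWΓ⟩
  have hext : (G.induce (Γ ∪ {v})).Connected :=
    connected_induce_union hΓconn.preconnected (Preconnected.of_subsingleton) hu rfl huv
  exact hmax ⟨Set.union_subset hΓA (Set.singleton_subset_iff.mpr hv), hext,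
    hWΓ.trans Set.subset_union_left⟩ Set.subset_union_left (Or.inr rfl)

theorem not_connected_of_cut {L R : Set V} (hL : L.Nonempty) (hR : R.Nonempty)
    (hLR : Disjoint L R) (hno : ∀ u ∈ L, ∀ v ∈ R, ¬ G.Adj u v) :
    ¬ (G.induce (L ∪ R)).Connected := fun hconn => by
  obtain ⟨a, ha⟩ := hL
  obtain ⟨b, hb⟩ := hR
  rcases subset_or_subset_of_connected hconn subset_rfl hno with h | h
  · exact hLR.notMem_of_mem_right hb (h (Or.inr hb))
  · exact hLR.notMem_of_mem_left ha (h (Or.inl ha))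

theorem isVertexExpandingOn_of_ncard_le_two [Finite V] {A : Set V}
    (hconn : (G.induce A).Connected) (hA : A.ncard ≤ 2) (X : Set V) (φ : ℝ) :
    IsVertexExpandingOn G A X φ := by
  rintro L S R rfl hLS hLR hSR hL hR hno
  have hcard : L.ncard + S.ncard + R.ncard ≤ 2 := by
    rwa [Set.ncard_union_eq (Set.disjoint_union_left.mpr ⟨hLR, hSR⟩),
      Set.ncard_union_eq hLS] at hA
  have hS : S = ∅ := by
    have := hL.ncard_pos
    have := hR.ncard_pos
    exact (Set.ncard_eq_zero).mp (by omega)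
  subst hS
  rw [Set.union_empty] at hconn
  exact (not_connected_of_cut hL hR hLR hno hconn).elim

variable (G) in
def IsSeparator (B : ℕ) (A X : Set V) : Prop :=
  X ⊆ A ∧ ∀ Γ, IsCompOf G (A \ X) Γ → Γ.ncard ≤ B

variable (G) in
def IsMinSeparator (B : ℕ) (A X : Set V) : Prop :=
  IsSeparator G B A X ∧ ∀ Y, IsSeparator G B A Y → X.ncard ≤ Y.ncard

theorem isSeparator_self (B : ℕ) (A : Set V) : IsSeparator G B A A :=
  ⟨subset_rfl, fun Γ hΓ => by
    obtain ⟨v, hv⟩ := hΓ.2.1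
    simpa using hΓ.1 hv⟩

theorem exists_isMinSeparator [Finite V] (B : ℕ) (A : Set V) : ∃ X, IsMinSeparator G B A X := by
  obtain ⟨X, hX, hmin⟩ := Set.exists_min_image {X | IsSeparator G B A X} Set.ncard
    (Set.toFinite _) ⟨A, isSeparator_self B A⟩
  exact ⟨X, hX, hmin⟩

variable (G) in
noncomputable def minSeparator [Finite V] (B : ℕ) (A : Set V) : Set V :=
  (exists_isMinSeparator (G := G) B A).choose

theorem isMinSeparator_minSeparator [Finite V] (B : ℕ) (A : Set V) :
    IsMinSeparator G B A (minSeparator G B A) :=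
  (exists_isMinSeparator B A).choose_spec

theorem IsSeparator.exchange [Finite V] {B : ℕ} {X L S R : Set V}
    (hX : IsSeparator G B (L ∪ S ∪ R) X) (hLS : Disjoint L S) (hLR : Disjoint L R)
    (hno : ∀ u ∈ L, ∀ v ∈ R, ¬ G.Adj u v) (hLB : L.ncard ≤ B) :
    IsSeparator G B (L ∪ S ∪ R) (X \ L ∪ S \ X) := by
  refine ⟨Set.union_subset (Set.sdiff_subset.trans hX.1)
    (Set.sdiff_subset.trans (Set.subset_union_right.trans Set.subset_union_left)), ?_⟩
  intro Γ hΓ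
  have hΓsub : Γ ⊆ L ∪ R \ X := fun a ha => by
    have hLS' : a ∈ L → a ∉ S := fun h => Set.disjoint_left.mp hLS h
    have hLR' : a ∈ L → a ∉ R := fun h => Set.disjoint_left.mp hLR h
    have := hΓ.1 ha
    simp only [Set.mem_union, Set.mem_sdiff] at this ⊢
    tauto
  rcases subset_or_subset_of_connected hΓ.2.2.1 hΓsub (fun u hu v hv => hno u hu v hv.1) with
    hL | hR
  · exact (Set.ncard_le_ncard hL).trans hLB
  · obtain ⟨Γ', hΓ', hΓΓ'⟩ := exists_isCompOf_superset hΓ.2.2.1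
      (hR.trans (Set.sdiff_subset_sdiff_left Set.subset_union_right))
    exact (Set.ncard_le_ncard hΓΓ').trans (hX.2 Γ' hΓ')

theorem IsMinSeparator.ncard_inter_union_le [Finite V] {B : ℕ} {X L S R : Set V}
    (hX : IsMinSeparator G B (L ∪ S ∪ R) X) (hLS : Disjoint L S) (hLR : Disjoint L R)
    (hno : ∀ u ∈ L, ∀ v ∈ R, ¬ G.Adj u v) (hLB : L.ncard ≤ B) :
    (X ∩ (L ∪ S)).ncard ≤ S.ncard := by
  have hexch := hX.2 _ (hX.1.exchange hLS hLR hno hLB)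
  have hY := Set.ncard_union_le (X \ L) (S \ X)
  have hXL := Set.ncard_inter_add_ncard_sdiff_eq_ncard X L
  have hSX := Set.ncard_inter_add_ncard_sdiff_eq_ncard S X
  have hXLS : (X ∩ (L ∪ S)).ncard = (X ∩ L).ncard + (X ∩ S).ncard := by
    rw [Set.inter_union_distrib_left,
      Set.ncard_union_eq (hLS.mono Set.inter_subset_right Set.inter_subset_right)]
  rw [Set.inter_comm S X] at hSX
  omega

theorem IsMinSeparator.isVertexExpandingOn [Finite V] {B : ℕ} {A X : Set V}
    (hX : IsMinSeparator G B A X) (hA : A.ncard ≤ 2 * B) : IsVertexExpandingOn G A X 1 := by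
  rintro L S R rfl hLS hLR hSR - - hno
  rw [one_mul]
  have hLR_card : L.ncard + R.ncard ≤ 2 * B := by
    rw [← Set.ncard_union_eq hLR]
    exact (Set.ncard_le_ncard (Set.union_subset_union_left R Set.subset_union_left)).trans hA
  rcases le_total L.ncard R.ncard with h | h
  · exact min_le_of_left_le (by exact_mod_cast hX.ncard_inter_union_le hLS hLR hno (by omega))
  · rw [show L ∪ S ∪ R = R ∪ S ∪ L by ac_rfl] at hX
    have hRS := hX.ncard_inter_union_le hSR.symm hLR.symm
      (fun u hu v hv huv => hno v hv u hu huv.symm) (by omega)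
    exact min_le_of_right_le (by exact_mod_cast hRS)

theorem iUnion_fin_le_disjointed {α : Type*} {k : ℕ} {E : ℕ → Set α} (hE : Monotone E)
    (ℓ : Fin k) : ⋃ i : Fin k, ⋃ (_ : i ≤ ℓ), disjointed E i = E ℓ := by
  rw [← congrFun hE.partialSups_eq ℓ, ← partialSups_disjointed, partialSups_eq_biSup]
  ext v
  simp only [Set.iSup_eq_iUnion, Set.mem_iUnion, Fin.le_def]
  constructor
  · rintro ⟨i, hi, hv⟩
    exact ⟨i, hi, hv⟩
  · rintro ⟨n, hn, hv⟩
    exact ⟨⟨n, by omega⟩, hn, hv⟩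

section Construction

variable [Finite V] (G)

noncomputable def componentwiseMinSeparator (B : ℕ) (A : Set V) : Set V :=
  {v | ∃ Γ, IsCompOf G A Γ ∧ v ∈ minSeparator G B Γ}

variable {G} in
theorem componentwiseMinSeparator_inter {B : ℕ} {A Γ : Set V} (hΓ : IsCompOf G A Γ) :
    componentwiseMinSeparator G B A ∩ Γ = minSeparator G B Γ := by
  ext v
  constructor
  · rintro ⟨⟨Γ', hΓ', hv⟩, hvΓ⟩
    rwa [← IsCompOf.eq_of_inter_nonempty hΓ' hΓ
      ⟨v, (isMinSeparator_minSeparator B Γ').1.1 hv, hvΓ⟩]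
  · exact fun hv => ⟨⟨Γ, hΓ, hv⟩, (isMinSeparator_minSeparator B Γ).1.1 hv⟩

variable {G} in
theorem ncard_le_of_isCompOf_sdiff_componentwiseMinSeparator {B : ℕ} {A Γ : Set V}
    (hΓ : IsCompOf G (A \ componentwiseMinSeparator G B A) Γ) : Γ.ncard ≤ B := by
  obtain ⟨Γ₀, hΓ₀, hΓΓ₀⟩ := exists_isCompOf_superset hΓ.2.2.1 (hΓ.1.trans Set.sdiff_subset)
  obtain ⟨Γ₁, hΓ₁, hΓΓ₁⟩ := exists_isCompOf_superset hΓ.2.2.1 (A := Γ₀ \ minSeparator G B Γ₀)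
    (fun v hv => ⟨hΓΓ₀ hv, fun hsep => (hΓ.1 hv).2 ⟨Γ₀, hΓ₀, hsep⟩⟩)
  exact (Set.ncard_le_ncard hΓΓ₁).trans ((isMinSeparator_minSeparator B Γ₀).1.2 Γ₁ hΓ₁)

/-- The vertices not yet assigned to a level after `j` rounds of peeling. -/
noncomputable def remaining (k : ℕ) : ℕ → Set V
  | 0 => Set.univ
  | j + 1 => remaining k j \ componentwiseMinSeparator G (2 ^ (k - (j + 1))) (remaining k j)

theorem remaining_antitone (k : ℕ) : Antitone (remaining G k) :=
  antitone_nat_of_succ_le fun _ => Set.sdiff_subset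

variable {G} in
theorem ncard_le_of_isCompOf_remaining {k : ℕ} (hV : Nat.card V ≤ 2 ^ k) :
    ∀ {j : ℕ} {Γ : Set V}, IsCompOf G (remaining G k j) Γ → Γ.ncard ≤ 2 ^ (k - j)
  | 0, Γ, _ => (Set.ncard_le_card Γ).trans hV
  | _ + 1, _, hΓ => ncard_le_of_isCompOf_sdiff_componentwiseMinSeparator hΓ

variable {G} in
theorem isVertexExpandingOn_remaining_sdiff {k j : ℕ} (hV : Nat.card V ≤ 2 ^ k) {Γ : Set V}
    (hΓ : IsCompOf G (remaining G k j) Γ) :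
    IsVertexExpandingOn G Γ ((remaining G k j \ remaining G k (j + 1)) ∩ Γ) 1 := by
  have hlevel : (remaining G k j \ remaining G k (j + 1)) ∩ Γ =
      minSeparator G (2 ^ (k - (j + 1))) Γ := by
    rw [← componentwiseMinSeparator_inter hΓ, remaining, sdiff_sdiff_right_self]
    exact (Set.inter_assoc _ _ _).trans
      (Set.inter_eq_right.mpr (Set.inter_subset_right.trans hΓ.1))
  rw [hlevel]
  refine (isMinSeparator_minSeparator _ Γ).isVertexExpandingOn
    ((ncard_le_of_isCompOf_remaining hV hΓ).trans ?_)
  rw [← pow_succ']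
  exact Nat.pow_le_pow_right two_pos (by omega)

/-- The union of the levels `0, …, n`, i.e. `V_{≤ n+1}` in the paper's one-based indexing. -/
noncomputable def levelPrefix (k n : ℕ) : Set V :=
  remaining G k (k - 1 - n)

noncomputable def level (k : ℕ) : ℕ → Set V :=
  disjointed (levelPrefix G k)

theorem levelPrefix_monotone (k : ℕ) : Monotone (levelPrefix G k) :=
  fun _ _ h => remaining_antitone G k (by omega)

theorem iUnion_level_le {k : ℕ} (ℓ : Fin k) :
    ⋃ i : Fin k, ⋃ (_ : i ≤ ℓ), level G k i = levelPrefix G k ℓ :=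
  iUnion_fin_le_disjointed (levelPrefix_monotone G k) ℓ

variable {G} in
theorem isVertexExpandingOn_level {k ℓ : ℕ} (hV : Nat.card V ≤ 2 ^ k) (hℓ : ℓ < k) {Γ : Set V}
    (hΓ : IsCompOf G (levelPrefix G k ℓ) Γ) : IsVertexExpandingOn G Γ (level G k ℓ ∩ Γ) 1 := by
  rcases ℓ with _ | m
  · refine isVertexExpandingOn_of_ncard_le_two hΓ.2.2.1
      ((ncard_le_of_isCompOf_remaining hV hΓ).trans ?_) _ _
    rw [show k - (k - 1 - 0) = 1 by omega, pow_one]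
  · have hj : k - 1 - m = k - 1 - (m + 1) + 1 := by omega
    have hsucc := (levelPrefix_monotone G k).disjointed_succ (not_isMax m)
    rw [Order.succ_eq_add_one] at hsucc
    rw [level, hsucc, levelPrefix, levelPrefix, hj]
    exact isVertexExpandingOn_remaining_sdiff hV hΓ

end Construction

end VertexExpanderHierarchy

open VertexExpanderHierarchy in
/-- Every graph on `n ≥ 2` vertices has a vertex partition into
`h ≤ ⌈log₂ n⌉` levels inducing an `(h, 1)`-vertex-expander hierarchy. -/
theorem stmt_5 (V : Type) [Fintype V] (G : SimpleGraph V)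
    (h2 : 2 ≤ Fintype.card V) :
    ∃ (h : ℕ) (P : Fin h → Set V),
      h ≤ Nat.clog 2 (Fintype.card V) ∧
      (⋃ i, P i) = Set.univ ∧
      (Pairwise fun i j => Disjoint (P i) (P j)) ∧
      ∀ ℓ : Fin h, ∀ Γ : Set V,
        IsCompOf G (⋃ i, ⋃ (_ : i ≤ ℓ), P i) Γ →
        IsVertexExpandingOn G Γ (P ℓ ∩ Γ) 1 := by
  set k := Nat.clog 2 (Fintype.card V)
  have hk : 0 < k := Nat.clog_pos one_lt_two h2
  have hV : Nat.card V ≤ 2 ^ k := Nat.card_eq_fintype_card (α := V) ▸ Nat.le_pow_clog one_lt_two _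
  refine ⟨k, fun i => level G k i, le_rfl, Set.eq_univ_of_univ_subset ?_,
    (disjoint_disjointed _).comp_of_injective Fin.val_injective, fun ℓ Γ hΓ => ?_⟩
  · calc Set.univ = levelPrefix G k (k - 1) := by simp [levelPrefix, remaining]
      _ ⊆ ⋃ i : Fin k, level G k i := by
        rw [← iUnion_level_le G ⟨k - 1, by omega⟩]
        exact Set.iUnion₂_subset_iUnion _ _
  · beta_reduce at hΓ ⊢
    rw [iUnion_level_le] at hΓ
    exact isVertexExpandingOn_level hV ℓ.isLt hΓ
end

section
/- For every finite simple graph G = (V,E) on n vertices, there exists a vertex set X ⊆ V such that (i) every connected component of the induced subgraph G − X on V ∖ X contains at most n/2 vertices, and (ii) X is 1-vertex-expanding in G, i.e., for every vertex cut (L,S,R) of G, |S| ≥ min{|X∩(L∪S)|, |X∩(R∪S)|}. -/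
/-- Reachability within a set `A`: there is a walk from `a` to `b` all of whose
vertices lie in `A`. Built with "tail" steps. -/
inductive ReachIn {V : Type*} (G : SimpleGraph V) (A : Set V) : V → V → Prop
  | refl (a : V) (ha : a ∈ A) : ReachIn G A a a
  | tail {a b c : V} (h : ReachIn G A a b) (hbc : G.Adj b c) (hc : c ∈ A) : ReachIn G A a c

namespace ReachIn

variable {V : Type*} {G : SimpleGraph V} {A : Set V}

lemma mem_left {a b : V} (h : ReachIn G A a b) : a ∈ A := by
  induction h with
  | refl ha => exact ha
  | tail h hbc hc ih => exact ih

lemma mem_right {a b : V} (h : ReachIn G A a b) : b ∈ A := by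
  induction h with
  | refl ha => exact ha
  | tail h hbc hc ih => exact hc

lemma head {a b c : V} (hab : G.Adj a b) (ha : a ∈ A) (h : ReachIn G A b c) :
    ReachIn G A a c := by
  induction h with
  | refl hb => exact (ReachIn.refl _ ha).tail hab hb
  | tail h hbc hc ih => exact (ih).tail hbc hc

lemma symm {a b : V} (h : ReachIn G A a b) : ReachIn G A b a := by
  induction h with
  | refl ha => exact ReachIn.refl _ ha
  | tail h hbc hc ih => exact head hbc.symm hc ih

lemma trans {a b c : V} (h : ReachIn G A a b) (h' : ReachIn G A b c) :
    ReachIn G A a c := by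
  induction h' with
  | refl hb => exact h
  | tail h' hbc hc ih => exact ih.tail hbc hc

lemma mono {B : Set V} (hAB : A ⊆ B) {a b : V} (h : ReachIn G A a b) :
    ReachIn G B a b := by
  induction h with
  | refl ha => exact ReachIn.refl _ (hAB ha)
  | tail h hbc hc ih => exact ih.tail hbc (hAB hc)

/-- Walks in the induced subgraph give `ReachIn`. -/
lemma of_walk {a b : A} (w : (G.induce A).Walk a b) : ReachIn G A a b := by
  induction w with
  | nil => exact ReachIn.refl _ (Subtype.coe_prop _)
  | cons h p ih => exact head h (Subtype.coe_prop _) ih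

lemma of_connected (hc : (G.induce A).Connected) {a b : V} (ha : a ∈ A) (hb : b ∈ A) :
    ReachIn G A a b := by
  obtain ⟨w⟩ := hc.preconnected ⟨a, ha⟩ ⟨b, hb⟩
  exact of_walk w

end ReachIn

/-- A connected set splits along a cut with no crossing edges. -/
lemma subset_or_subset {V : Type*} {G : SimpleGraph V} {L M Γ : Set V}
    (hsub : Γ ⊆ L ∪ M) (hadj : ∀ u ∈ L, ∀ v ∈ M, ¬ G.Adj u v)
    (hne : Γ.Nonempty) (hc : (G.induce Γ).Connected) :
    Γ ⊆ L ∨ Γ ⊆ M := by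
  obtain ⟨u₀, hu₀⟩ := hne
  have key : ∀ {a b : V}, ReachIn G Γ a b → (a ∈ L → b ∈ L) ∧ (a ∈ M → b ∈ M) := by
    intro a b h
    induction h with
    | refl ha => exact ⟨id, id⟩
    | tail h hbc hc' ih =>
      rcases hsub hc' with hcL | hcM
      · refine ⟨fun ha => hcL, fun ha => ?_⟩
        exact absurd hbc.symm (hadj _ hcL _ (ih.2 ha))
      · refine ⟨fun ha => ?_, fun ha => hcM⟩
        exact absurd hbc (hadj _ (ih.1 ha) _ hcM)
  rcases hsub hu₀ with h0 | h0
  · left; intro v hv; exact (key (ReachIn.of_connected hc hu₀ hv)).1 h0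
  · right; intro v hv; exact (key (ReachIn.of_connected hc hu₀ hv)).2 h0

/-- Every nonempty connected subset of `A` extends to a component of `G[A]`. -/
lemma exists_comp_superset {V : Type*} (G : SimpleGraph V) {A Γ : Set V}
    (hΓA : Γ ⊆ A) (hne : Γ.Nonempty) (hc : (G.induce Γ).Connected) :
    ∃ Γ' : Set V, IsCompOf G A Γ' ∧ Γ ⊆ Γ' := by
  obtain ⟨u₀, hu₀⟩ := hne
  set Γ' : Set V := {v | ReachIn G A u₀ v} with hΓ'def
  have hu₀A : u₀ ∈ A := hΓA hu₀
  have hu₀Γ' : u₀ ∈ Γ' := ReachIn.refl u₀ hu₀A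
  have hΓ'A : Γ' ⊆ A := fun v hv => hv.mem_right
  have hΓΓ' : Γ ⊆ Γ' := fun v hv =>
    (ReachIn.of_connected hc hu₀ hv).mono hΓA
  -- reachability within Γ' in the induced graph
  have reach : ∀ {v : V} (hv : v ∈ Γ'),
      (G.induce Γ').Reachable ⟨u₀, hu₀Γ'⟩ ⟨v, hv⟩ := by
    intro v hv
    induction hv with
    | refl ha => exact SimpleGraph.Reachable.refl _
    | tail h hbc hcA ih =>
      have hb : _ ∈ Γ' := h
      have hcΓ' : _ ∈ Γ' := h.tail hbc hcA
      have step : (G.induce Γ').Adj ⟨_, hb⟩ ⟨_, hcΓ'⟩ := hbc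
      exact ih.trans step.reachable
  refine ⟨Γ', ⟨hΓ'A, ⟨u₀, hu₀Γ'⟩, ?_, ?_⟩, hΓΓ'⟩
  · rw [SimpleGraph.connected_iff]
    exact ⟨fun x y => (reach x.2).symm.trans (reach y.2), ⟨⟨u₀, hu₀Γ'⟩⟩⟩
  · intro u hu v hv huv
    exact hu.tail huv hv

section Key

variable {V : Type} [Fintype V] (G : SimpleGraph V)

lemma key_lemma (X L S R : Set V) (hunion : L ∪ S ∪ R = Set.univ)
    (hLS : Disjoint L S) (hLR : Disjoint L R) (hSR : Disjoint S R)
    (hadj : ∀ u ∈ L, ∀ v ∈ R, ¬ G.Adj u v)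
    (hL2 : 2 * L.ncard ≤ Fintype.card V)
    (hS : S.ncard < (X ∩ (L ∪ S)).ncard)
    (hPX : ∀ Γ : Set V, IsCompOf G Xᶜ Γ → (Γ.ncard : ℝ) ≤ (Fintype.card V : ℝ) / 2) :
    ∃ X' : Set V,
      (∀ Γ : Set V, IsCompOf G X'ᶜ Γ → (Γ.ncard : ℝ) ≤ (Fintype.card V : ℝ) / 2) ∧
      X'.ncard < X.ncard := by
  classical
  refine ⟨(X ∩ R) ∪ S, ?_, ?_⟩
  · intro Γ hΓ
    obtain ⟨hΓsub, hΓne, hΓconn, hΓcl⟩ := hΓ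
    have hsub : Γ ⊆ L ∪ (R \ X) := by
      intro v hv
      have hv' : v ∉ (X ∩ R) ∪ S := hΓsub hv
      have hvU : v ∈ L ∪ S ∪ R := by rw [hunion]; trivial
      rcases hvU with hv1 | hv2
      · rcases hv1 with h | h
        · exact Or.inl h
        · exact absurd (Or.inr h) hv'
      · right
        exact ⟨hv2, fun hX => hv' (Or.inl ⟨hX, hv2⟩)⟩
    have hadj' : ∀ u ∈ L, ∀ v ∈ R \ X, ¬ G.Adj u v := fun u hu v hv =>
      hadj u hu v hv.1
    rcases subset_or_subset hsub hadj' hΓne hΓconn with hΓL | hΓR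
    · have h1 : Γ.ncard ≤ L.ncard := Set.ncard_le_ncard hΓL L.toFinite
      have : 2 * Γ.ncard ≤ Fintype.card V := le_trans (by omega) hL2
      have := (Nat.cast_le (α := ℝ)).2 this
      push_cast at this
      linarith
    · have hΓX : Γ ⊆ Xᶜ := fun v hv => (hΓR hv).2
      obtain ⟨Γ', hΓ', hsub'⟩ := exists_comp_superset G hΓX hΓne hΓconn
      have h1 : Γ.ncard ≤ Γ'.ncard := Set.ncard_le_ncard hsub' Γ'.toFinite
      have h2 := hPX Γ' hΓ'
      have := (Nat.cast_le (α := ℝ)).2 h1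
      linarith
  · have hd1 : Disjoint (X ∩ R) S := (hSR.symm.mono_left Set.inter_subset_right)
    have e1 : ((X ∩ R) ∪ S).ncard = (X ∩ R).ncard + S.ncard :=
      Set.ncard_union_eq hd1 (Set.toFinite _) (Set.toFinite _)
    have e2 : X = (X ∩ (L ∪ S)) ∪ (X ∩ R) := by
      rw [← Set.inter_union_distrib_left, hunion, Set.inter_univ]
    have hd2 : Disjoint (X ∩ (L ∪ S)) (X ∩ R) := by
      refine Disjoint.mono Set.inter_subset_right Set.inter_subset_right ?_
      exact Set.disjoint_union_left.2 ⟨hLR, hSR⟩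
    have e3 : X.ncard = (X ∩ (L ∪ S)).ncard + (X ∩ R).ncard := by
      conv_lhs => rw [e2]
      exact Set.ncard_union_eq hd2 (Set.toFinite _) (Set.toFinite _)
    omega

end Key

theorem stmt_6 (V : Type) [Fintype V] (G : SimpleGraph V) :
    ∃ X : Set V,
      (∀ Γ : Set V, IsCompOf G Xᶜ Γ → (Γ.ncard : ℝ) ≤ (Fintype.card V : ℝ) / 2) ∧
      IsVertexExpandingOn G Set.univ X 1 := by
  classical
  set P : Set V → Prop := fun X =>
    ∀ Γ : Set V, IsCompOf G Xᶜ Γ → (Γ.ncard : ℝ) ≤ (Fintype.card V : ℝ) / 2 with hP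
  have hPuniv : P Set.univ := by
    intro Γ hΓ
    obtain ⟨hsub, ⟨v, hv⟩, -, -⟩ := hΓ
    simpa using hsub hv
  have hex : ∃ k, ∃ X, P X ∧ X.ncard = k := ⟨_, Set.univ, hPuniv, rfl⟩
  obtain ⟨X, hPX, hXcard⟩ := Nat.find_spec hex
  have hmin : ∀ Y, P Y → Nat.find hex ≤ Y.ncard := fun Y hY =>
    Nat.find_le ⟨Y, hY, rfl⟩
  refine ⟨X, hPX, ?_⟩
  intro L S R hunion hLS hLR hSR hLne hRne hadj
  by_contra hcon
  push_neg at hcon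
  rw [one_mul] at hcon
  have hS1 : S.ncard < (X ∩ (L ∪ S)).ncard := by
    have := lt_of_lt_of_le hcon (min_le_left _ _)
    exact_mod_cast this
  have hS2 : S.ncard < (X ∩ (R ∪ S)).ncard := by
    have := lt_of_lt_of_le hcon (min_le_right _ _)
    exact_mod_cast this
  have hLRcard : L.ncard + R.ncard ≤ Fintype.card V := by
    rw [← Set.ncard_union_eq hLR L.toFinite R.toFinite]
    have := Set.ncard_le_ncard (Set.subset_univ (L ∪ R)) Set.finite_univ
    simpa [Set.ncard_univ, Nat.card_eq_fintype_card] using this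
  have contra : ∃ X' : Set V, P X' ∧ X'.ncard < X.ncard := by
    rcases le_total L.ncard R.ncard with hle | hle
    · exact key_lemma G X L S R hunion hLS hLR hSR hadj (by omega) hS1 hPX
    · refine key_lemma G X R S L ?_ hSR.symm hLR.symm hLS.symm
        (fun u hu v hv h => hadj v hv u hu h.symm) (by omega) hS2 hPX
      rw [← hunion]
      ext x
      simp only [Set.mem_union]
      tauto
  obtain ⟨X', hPX', hlt⟩ := contra
  have := hmin X' hPX'
  omega
end

section
/- Let G = (V,E) be a finite simple graph, let φ > 0 be a real number, and let X ⊆ V. If X is 3φ-vertex-expanding in G, then X is φ-tough in G. -/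
/-- `compCount G S X` is `c_{G−S}(X)`: the number of connected components of
the subgraph of `G` induced on the complement of `S` that contain a vertex
of `X`. -/
noncomputable def compCount {V : Type*} (G : SimpleGraph V) (S X : Set V) : ℕ :=
  {Γ : Set V | IsCompOf G Sᶜ Γ ∧ (Γ ∩ X).Nonempty}.ncard

/-- `X` is `φ`-tough in `G`: whenever deleting `S` separates `X` into more than
one component, `|S| ≥ φ · c_{G−S}(X)`. -/
def IsTough {V : Type*} (G : SimpleGraph V) (X : Set V) (φ : ℝ) : Prop :=
  ∀ S : Set V, 1 < compCount G S X →
    φ * (compCount G S X : ℝ) ≤ (S.ncard : ℝ)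

/-- `X` is `φ`-vertex-expanding in `G`: for every vertex cut `(L, S, R)` of `G`,
`|S| ≥ φ · min{|X ∩ (L∪S)|, |X ∩ (R∪S)|}`. -/
def IsVertexExpanding {V : Type*} (G : SimpleGraph V) (X : Set V) (φ : ℝ) : Prop :=
  ∀ L S R : Set V, L ∪ S ∪ R = Set.univ →
    Disjoint L S → Disjoint L R → Disjoint S R →
    L.Nonempty → R.Nonempty →
    (∀ u ∈ L, ∀ v ∈ R, ¬ G.Adj u v) →
    φ * min ((X ∩ (L ∪ S)).ncard : ℝ) ((X ∩ (R ∪ S)).ncard : ℝ) ≤ (S.ncard : ℝ)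

lemma mem_of_walk {V : Type*} (G : SimpleGraph V) {A Γ Γ' : Set V}
    (hΓA : Γ ⊆ A)
    (hcl : ∀ u ∈ Γ', ∀ v ∈ A, G.Adj u v → v ∈ Γ')
    {a b : Γ} (w : (G.induce Γ).Walk a b) (ha : (a : V) ∈ Γ') : (b : V) ∈ Γ' := by
  induction w with
  | nil => exact ha
  | @cons x y z h p ih => exact ih (hcl x ha y (hΓA y.2) h)

lemma comp_eq_comp {V : Type*} {G : SimpleGraph V} {A Γ Γ' : Set V}
    (h : IsCompOf G A Γ) (h' : IsCompOf G A Γ') {v : V} (hv : v ∈ Γ) (hv' : v ∈ Γ') :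
    Γ = Γ' := by
  have key : ∀ Δ Δ' : Set V, IsCompOf G A Δ → IsCompOf G A Δ' →
      v ∈ Δ → v ∈ Δ' → Δ ⊆ Δ' := by
    intro Δ Δ' hΔ hΔ' hvΔ hvΔ' u hu
    obtain ⟨w⟩ := hΔ.2.2.1.preconnected ⟨v, hvΔ⟩ ⟨u, hu⟩
    exact mem_of_walk G hΔ.1 hΔ'.2.2.2 w hvΔ'
  exact subset_antisymm (key Γ Γ' h h' hv hv') (key Γ' Γ h' h hv' hv)

/-- If `X` is `3φ`-vertex-expanding in `G`, then `X` is
`φ`-tough in `G`. -/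
theorem stmt_9 (V : Type) [Fintype V] (G : SimpleGraph V) (φ : ℝ) (hφ : 0 < φ)
    (X : Set V) (hX : IsVertexExpanding G X (3 * φ)) :
    IsTough G X φ := by
  intro S hc
  classical
  set T := {Γ : Set V | IsCompOf G Sᶜ Γ ∧ (Γ ∩ X).Nonempty} with hTdef
  have hcT : compCount G S X = T.ncard := rfl
  set c := compCount G S X with hcdef
  have hc2 : 2 ≤ c := hc
  -- pick a set A of c/2 components
  obtain ⟨A, hAT, hAcard⟩ := Set.exists_subset_card_eq (show c / 2 ≤ T.ncard by omega)
  set B := T \ A with hBdef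
  have hTfin : T.Finite := Set.toFinite T
  have hBcard : B.ncard = c - c / 2 := by
    rw [hBdef, Set.ncard_diff hAT (hTfin.subset hAT), hAcard, ← hcT]
  -- choice of an X-vertex in each component
  have hTne : T.Nonempty := Set.nonempty_of_ncard_ne_zero (by omega)
  obtain ⟨Γ₀, hΓ₀⟩ := hTne
  obtain ⟨x₀, hx₀⟩ := hΓ₀.2
  let f : Set V → V := fun Γ => if h : (Γ ∩ X).Nonempty then h.choose else x₀
  have hf : ∀ Γ ∈ T, f Γ ∈ Γ ∩ X := by
    intro Γ hΓ
    simp only [f, dif_pos hΓ.2]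
    exact hΓ.2.choose_spec
  have hfinj : Set.InjOn f T := by
    intro Γ hΓ Δ hΔ hfe
    have h1 := hf Γ hΓ
    have h2 := hf Δ hΔ
    exact comp_eq_comp hΓ.1 hΔ.1 h1.1 (hfe ▸ h2.1)
  -- the cut
  set L := ⋃₀ A with hLdef
  set R := Sᶜ \ L with hRdef
  have hLS : L ⊆ Sᶜ := by
    intro v hv
    obtain ⟨Γ, hΓA, hvΓ⟩ := hv
    exact (hAT hΓA).1.1 hvΓ
  have hcover : L ∪ S ∪ R = Set.univ := by
    ext v
    simp only [Set.mem_union, Set.mem_univ, iff_true, hRdef, Set.mem_diff,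
      Set.mem_compl_iff]
    by_cases hvS : v ∈ S
    · tauto
    · by_cases hvL : v ∈ L <;> tauto
  have hLSdisj : Disjoint L S := Set.disjoint_left.mpr fun v hv => hLS hv
  have hLRdisj : Disjoint L R := Set.disjoint_left.mpr fun v hv hv' => hv'.2 hv
  have hSRdisj : Disjoint S R := Set.disjoint_left.mpr fun v hv hv' => hv'.1 hv
  -- B-components avoid L
  have hBnotL : ∀ Γ ∈ B, ∀ v ∈ Γ, v ∉ L := by
    intro Γ hΓ v hv hvL
    obtain ⟨Δ, hΔA, hvΔ⟩ := hvL
    have : Γ = Δ := comp_eq_comp (hΓ.1).1 ((hAT hΔA).1) hv hvΔ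
    exact hΓ.2 (this ▸ hΔA)
  have hAcard1 : 1 ≤ A.ncard := by rw [hAcard]; omega
  have hBcard1 : 1 ≤ B.ncard := by rw [hBcard]; omega
  have hLne : L.Nonempty := by
    obtain ⟨Γ, hΓA⟩ := Set.nonempty_of_ncard_ne_zero (by omega : A.ncard ≠ 0)
    obtain ⟨v, hv⟩ := (hAT hΓA).1.2.1
    exact ⟨v, Γ, hΓA, hv⟩
  have hRne : R.Nonempty := by
    obtain ⟨Γ, hΓB⟩ := Set.nonempty_of_ncard_ne_zero (by omega : B.ncard ≠ 0)
    obtain ⟨v, hv⟩ := (hΓB.1).1.2.1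
    exact ⟨v, (hΓB.1).1.1 hv, hBnotL Γ hΓB v hv⟩
  have hnoedge : ∀ u ∈ L, ∀ v ∈ R, ¬ G.Adj u v := by
    intro u hu v hv hadj
    obtain ⟨Γ, hΓA, huΓ⟩ := hu
    have : v ∈ Γ := (hAT hΓA).1.2.2.2 u huΓ v hv.1 hadj
    exact hv.2 ⟨Γ, hΓA, this⟩
  have hexp := hX L S R hcover hLSdisj hLRdisj hSRdisj hLne hRne hnoedge
  -- counting
  have hA_le : (c / 2 : ℕ) ≤ (X ∩ (L ∪ S)).ncard := by
    rw [← hAcard, ← Set.ncard_image_of_injOn (hfinj.mono hAT)]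
    apply Set.ncard_le_ncard _ (Set.toFinite _)
    rintro v ⟨Γ, hΓA, rfl⟩
    have h := hf Γ (hAT hΓA)
    exact ⟨h.2, Or.inl ⟨Γ, hΓA, h.1⟩⟩
  have hB_le : (c - c / 2 : ℕ) ≤ (X ∩ (R ∪ S)).ncard := by
    rw [← hBcard, ← Set.ncard_image_of_injOn (hfinj.mono Set.diff_subset)]
    apply Set.ncard_le_ncard _ (Set.toFinite _)
    rintro v ⟨Γ, hΓB, rfl⟩
    have h := hf Γ hΓB.1
    exact ⟨h.2, Or.inl ⟨(hΓB.1).1.1 h.1, hBnotL Γ hΓB _ h.1⟩⟩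
  -- arithmetic
  have hmin : ((c / 2 : ℕ) : ℝ) ≤
      min ((X ∩ (L ∪ S)).ncard : ℝ) ((X ∩ (R ∪ S)).ncard : ℝ) := by
    apply le_min
    · exact_mod_cast hA_le
    · exact_mod_cast le_trans (by omega : (c / 2 : ℕ) ≤ c - c / 2) hB_le
  have hnat : (c : ℝ) ≤ 3 * ((c / 2 : ℕ) : ℝ) := by
    have : c ≤ 3 * (c / 2) := by omega
    exact_mod_cast this
  calc φ * (c : ℝ) ≤ φ * (3 * ((c / 2 : ℕ) : ℝ)) := by
        exact mul_le_mul_of_nonneg_left hnat hφ.le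
    _ = (3 * φ) * ((c / 2 : ℕ) : ℝ) := by ring
    _ ≤ (3 * φ) * min ((X ∩ (L ∪ S)).ncard : ℝ) ((X ∩ (R ∪ S)).ncard : ℝ) := by
        apply mul_le_mul_of_nonneg_left hmin (by linarith)
    _ ≤ (S.ncard : ℝ) := hexp
end

section
/- Let G = (V,E) be a finite simple graph, let φ > 0 be a real number, let X ⊆ V be φ-vertex-expanding in G, and let F ⊆ V with |F| ≤ f for an integer f ≥ 0. If C₁ and C₂ are connected components of the induced subgraph G − F on V ∖ F such that |(C₁ ∪ N_G(C₁)) ∩ X| > f/φ and |(C₂ ∪ N_G(C₂)) ∩ X| > f/φ, then C₁ = C₂. -/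
/-- `nbhd G C` is `N_G(C)`: the set of vertices outside `C` adjacent in `G` to
some vertex of `C`. -/
def nbhd {V : Type*} (G : SimpleGraph V) (C : Set V) : Set V :=
  {v | v ∉ C ∧ ∃ u ∈ C, G.Adj u v}

lemma comp_subset {V : Type*} (G : SimpleGraph V) (A C₁ C₂ : Set V)
    (h1 : IsCompOf G A C₁) (h2 : IsCompOf G A C₂) {x : V}
    (hx1 : x ∈ C₁) (hx2 : x ∈ C₂) : C₁ ⊆ C₂ := by
  obtain ⟨hA1, -, hconn1, -⟩ := h1
  obtain ⟨-, -, -, hcl2⟩ := h2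
  intro y hy
  obtain ⟨w⟩ := hconn1 ⟨x, hx1⟩ ⟨y, hy⟩
  suffices H : ∀ (a b : C₁) (_ : (G.induce C₁).Walk a b), (a:V) ∈ C₂ → (b:V) ∈ C₂ from
    H _ _ w hx2
  intro a b w
  induction w with
  | nil => exact id
  | @cons u v _ h p ih =>
    intro ha
    exact ih (hcl2 _ ha _ (hA1 v.2) h)

lemma nbhd_subset_F {V : Type*} (G : SimpleGraph V) (F C : Set V)
    (h : IsCompOf G Fᶜ C) : nbhd G C ⊆ F := by
  intro v ⟨hvC, u, hu, huv⟩
  by_contra hvF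
  exact hvC (h.2.2.2 u hu v hvF huv)


/-- If `X` is `φ`-vertex-expanding and `|F| ≤ f`, then any
two components of `G − F` whose closed neighborhood contains more than `f/φ`
vertices of `X` coincide. -/
theorem stmt_11 (V : Type) [Fintype V] (G : SimpleGraph V) (φ : ℝ) (hφ : 0 < φ)
    (X : Set V) (hX : IsVertexExpanding G X φ)
    (f : ℕ) (F : Set V) (hF : F.ncard ≤ f)
    (C₁ C₂ : Set V) (h1 : IsCompOf G Fᶜ C₁) (h2 : IsCompOf G Fᶜ C₂)
    (hb1 : (f : ℝ) / φ < (((C₁ ∪ nbhd G C₁) ∩ X).ncard : ℝ))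
    (hb2 : (f : ℝ) / φ < (((C₂ ∪ nbhd G C₂) ∩ X).ncard : ℝ)) :
    C₁ = C₂ := by

  by_contra hne
  -- distinct components are disjoint
  have hdisj : Disjoint C₁ C₂ := by
    rw [Set.disjoint_left]
    intro x hx1 hx2 
    exact hne (Set.Subset.antisymm (comp_subset G Fᶜ C₁ C₂ h1 h2 hx1 hx2)
      (comp_subset G Fᶜ C₂ C₁ h2 h1 hx2 hx1))
  have hN1F : nbhd G C₁ ⊆ F := nbhd_subset_F G F C₁ h1
  have hN2F : nbhd G C₂ ⊆ F := nbhd_subset_F G F C₂ h2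
  set L := C₁ with hL
  set S := nbhd G C₁ with hS
  set R := (C₁ ∪ nbhd G C₁)ᶜ with hR
  have hC₂R : C₂ ⊆ R := by
    intro v hv
    simp only [hR, Set.mem_compl_iff, Set.mem_union]
    rintro (hv1 | hv1)
    · exact (Set.disjoint_right.mp hdisj) hv hv1
    · exact h2.1 hv (hN1F hv1)
  have hLS : Disjoint L S := by
    rw [Set.disjoint_left]; intro v hv hv'; exact hv'.1 hv
  have hcut := hX L S R (by
      rw [Set.union_compl_self]
    ) hLS
    (by rw [Set.disjoint_compl_right_iff_subset]; exact Set.subset_union_left)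
    (by rw [Set.disjoint_compl_right_iff_subset]; exact Set.subset_union_right)
    h1.2.1 (h2.2.1.mono hC₂R)
    (by
      intro u hu v hv hadj
      apply hv
      by_cases hvC : v ∈ C₁
      · exact Or.inl hvC
      · exact Or.inr ⟨hvC, u, hu, hadj⟩)
  have hRS : R ∪ S = C₁ᶜ := by
    rw [hR, hS, Set.compl_union]
    ext v
    simp only [Set.mem_union, Set.mem_inter_iff, Set.mem_compl_iff]
    constructor
    · rintro (⟨h, _⟩ | h)
      · exact h
      · exact h.1
    · intro h
      by_cases hv : v ∈ nbhd G C₁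
      · exact Or.inr hv
      · exact Or.inl ⟨h, hv⟩
  have key1 : (f : ℝ) / φ < ((X ∩ (L ∪ S)).ncard : ℝ) := by
    rwa [Set.inter_comm]
  have key2 : (f : ℝ) / φ < ((X ∩ (R ∪ S)).ncard : ℝ) := by
    refine lt_of_lt_of_le hb2 ?_
    have hsub : (C₂ ∪ nbhd G C₂) ∩ X ⊆ X ∩ (R ∪ S) := by
      rw [hRS, Set.inter_comm]
      apply Set.inter_subset_inter_right
      intro v hv
      rcases hv with hv | hv
      · exact fun hc => hdisj.subset_compl_left hv hc
      · exact fun hc => h1.1 hc (hN2F hv)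
    exact_mod_cast Set.ncard_le_ncard hsub (Set.toFinite _)
  have hSf : (S.ncard : ℝ) ≤ f := by
    have := Set.ncard_le_ncard hN1F (Set.toFinite _)
    exact_mod_cast this.trans hF
  have hmin : (f : ℝ) / φ < min ((X ∩ (L ∪ S)).ncard : ℝ) ((X ∩ (R ∪ S)).ncard : ℝ) :=
    lt_min key1 key2
  have : (f : ℝ) < φ * min ((X ∩ (L ∪ S)).ncard : ℝ) ((X ∩ (R ∪ S)).ncard : ℝ) := by
    rw [div_lt_iff₀ hφ] at hmin
    linarith [hmin]
  linarith
end

section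
/- Let G = (V,E) be a finite simple graph, let φ > 0 be a real number, let X ⊆ E be φ-expanding in G, and let F ⊆ E with |F| ≤ f for an integer f ≥ 0. If u, v ∈ V are vertices such that the connected component of u in G − F has X-volume Deg_X(C_u) > f/φ and the connected component of v in G − F has X-volume Deg_X(C_v) > f/φ, then u and v are connected in G − F. -/
/-- `X ⊆ E(G)` is `φ`-expanding in `G`: for every `S ⊆ V`,
`|E(S, V∖S)| ≥ φ · min{Deg_X(S), Deg_X(V∖S)}`. -/
def IsExpanding {V : Type*} (G : SimpleGraph V) (X : Set (Sym2 V)) (φ : ℝ) : Prop :=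
  ∀ S : Set V,
    φ * min (degX X S : ℝ) (degX X Sᶜ : ℝ) ≤
      ((crossEdges G.edgeSet S Sᶜ).ncard : ℝ)

theorem degX_mono {V : Type} [Fintype V] (X : Set (Sym2 V)) {A B : Set V}
    (h : A ⊆ B) : degX X A ≤ degX X B := by
  apply Set.ncard_le_ncard
  · rintro ⟨a, e⟩ ⟨h1, h2, h3⟩; exact ⟨h h1, h2, h3⟩
  · exact Set.toFinite _

/-- If `X` is a `φ`-expanding edge set and `|F| ≤ f`, then
any two vertices whose components in `G − F` have `X`-volume greater than
`f/φ` are connected in `G − F`. -/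
theorem stmt_12 (V : Type) [Fintype V] (G : SimpleGraph V) (φ : ℝ) (hφ : 0 < φ)
    (X : Set (Sym2 V)) (hXE : X ⊆ G.edgeSet) (hX : IsExpanding G X φ)
    (f : ℕ) (F : Set (Sym2 V)) (hFE : F ⊆ G.edgeSet) (hF : F.ncard ≤ f)
    (u v : V)
    (hu : (f : ℝ) / φ <
      (degX X ((G.deleteEdges F).connectedComponentMk u).supp : ℝ))
    (hv : (f : ℝ) / φ <
      (degX X ((G.deleteEdges F).connectedComponentMk v).supp : ℝ)) :
    (G.deleteEdges F).Reachable u v := by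
  by_contra hne
  set G' := G.deleteEdges F with hG'
  set S := (G'.connectedComponentMk u).supp with hS
  -- cross edges are contained in F
  have hcross : crossEdges G.edgeSet S Sᶜ ⊆ F := by
    rintro e ⟨he, a, b, rfl, ha, hb⟩
    by_contra heF
    have hadj : G'.Adj a b := by
      rw [hG', SimpleGraph.deleteEdges_adj]
      exact ⟨(SimpleGraph.mem_edgeSet G).1 he, heF⟩
    have : b ∈ S := by
      rw [hS, SimpleGraph.ConnectedComponent.mem_supp_iff] at ha ⊢
      rw [← ha]
      exact (SimpleGraph.ConnectedComponent.sound hadj.reachable).symm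
    exact hb this
  have hcard : ((crossEdges G.edgeSet S Sᶜ).ncard : ℝ) ≤ (f : ℝ) := by
    have := Set.ncard_le_ncard hcross (Set.toFinite F)
    exact_mod_cast this.trans hF
  have hexp := (hX S).trans hcard
  -- degX S > f/φ
  have huS : (f : ℝ) / φ < (degX X S : ℝ) := hu
  have hSc : (degX X Sᶜ : ℝ) ≤ (f : ℝ) / φ := by
    rcases min_cases (degX X S : ℝ) (degX X Sᶜ : ℝ) with ⟨hmin, hle⟩ | ⟨hmin, hlt⟩
    · rw [hmin] at hexp
      have : (degX X S : ℝ) ≤ (f : ℝ) / φ := (le_div_iff₀' hφ).2 hexp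
      exact absurd this (not_le.2 huS)
    · rw [hmin] at hexp
      exact (le_div_iff₀' hφ).2 hexp
  -- C_v ⊆ Sᶜ
  have hsub : (G'.connectedComponentMk v).supp ⊆ Sᶜ := by
    intro x hx hxS
    rw [SimpleGraph.ConnectedComponent.mem_supp_iff] at hx
    rw [hS, SimpleGraph.ConnectedComponent.mem_supp_iff] at hxS
    exact hne (SimpleGraph.ConnectedComponent.exact (hxS.symm.trans hx))
  have : (degX X (G'.connectedComponentMk v).supp : ℝ) ≤ (degX X Sᶜ : ℝ) := by
    exact_mod_cast degX_mono X hsub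
  linarith
end

section
/- For every constant c ≥ 1 there is a constant C such that for every integer n ≥ 2 the following holds with w = ⌈C·log₂ n⌉ and m = 2·⌈log₂ n⌉: there exist functions uid : {0,1}^w × {0,1}^m → {0,1}^w, rec : {0,1}^w → {0,1}^m, and singleton : {0,1}^w × {0,1}^w → {0,1}^w ∪ {⊥} such that (i) for every seed s ∈ {0,1}^w and every x ∈ {0,1}^m, rec(uid(s,x)) = x; (ii) for every seed s and every x, singleton(s, uid(s,x)) = uid(s,x); and (iii) for every subset E' ⊆ {0,1}^m with |E'| > 1, the probability over a uniformly random seed s ∈ {0,1}^w that singleton(s, ⊕_{x∈E'} uid(s,x)) ≠ ⊥ is at most n^{−c}, where ⊕ denotes bitwise XOR of bit-vectors. -/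
open Polynomial

theorem scheme (m w : ℕ) (hmw : m < w) :
    ∃ (uid : (Fin w → ZMod 2) → (Fin m → ZMod 2) → (Fin w → ZMod 2))
      (recov : (Fin w → ZMod 2) → (Fin m → ZMod 2))
      (single : (Fin w → ZMod 2) → (Fin w → ZMod 2) → Option (Fin w → ZMod 2)),
      (∀ s x, recov (uid s x) = x) ∧
      (∀ s x, single s (uid s x) = some (uid s x)) ∧
      (∀ E' : Finset (Fin m → ZMod 2), 1 < E'.card →
        {s : Fin w → ZMod 2 | single s (∑ x ∈ E', uid s x) ≠ none}.ncard ≤ 4 ^ m) := by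
  classical
  set k := w - m with hkdef
  have hk0 : k ≠ 0 := by omega
  let K := GaloisField 2 k
  haveI : Fintype K := Fintype.ofFinite K
  have hrank : Module.finrank (ZMod 2) (Fin w → ZMod 2)
      = Module.finrank (ZMod 2) ((Fin m → ZMod 2) × K) := by
    rw [Module.finrank_prod, Module.finrank_pi, Module.finrank_pi,
      GaloisField.finrank 2 hk0, Fintype.card_fin, Fintype.card_fin]
    omega
  let e : (Fin w → ZMod 2) ≃ₗ[ZMod 2] ((Fin m → ZMod 2) × K) :=
    LinearEquiv.ofFinrankEq _ _ hrank
  have hcard : Fintype.card (Fin m → ZMod 2) = 2 ^ m := by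
    simp [Fintype.card_fun]
  let v : (Fin m → ZMod 2) ≃ Fin (2 ^ m) := Fintype.equivFinOfCardEq hcard
  let t : (Fin w → ZMod 2) → K := fun s => (e s).2
  let uid : (Fin w → ZMod 2) → (Fin m → ZMod 2) → (Fin w → ZMod 2) :=
    fun s x => e.symm (x, t s ^ ((v x : ℕ) + 1))
  let recov : (Fin w → ZMod 2) → (Fin m → ZMod 2) := fun y => (e y).1
  let single : (Fin w → ZMod 2) → (Fin w → ZMod 2) → Option (Fin w → ZMod 2) :=
    fun s y => if (e y).2 = t s ^ ((v ((e y).1) : ℕ) + 1) then some y else none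
  refine ⟨uid, recov, single, ?_, ?_, ?_⟩
  · intro s x; simp [uid, recov]
  · intro s x; simp [single, uid]
  · intro E' hE'
    set X : Fin m → ZMod 2 := ∑ x ∈ E', x with hX
    -- the polynomial
    set q : K[X] := (∑ x ∈ E', (Polynomial.X : K[X]) ^ ((v x : ℕ) + 1))
        + (Polynomial.X : K[X]) ^ ((v X : ℕ) + 1) with hq
    have hvkey : ∀ (x₀ x : Fin m → ZMod 2), (((v x : ℕ) + 1 = (v x₀ : ℕ) + 1) ↔ x = x₀) := by
      intro x₀ x
      constructor
      · intro hh
        have hvv : (v x : ℕ) = (v x₀ : ℕ) := by omega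
        exact v.injective (Fin.val_injective hvv)
      · rintro rfl; rfl
    have hcoeff : ∀ d : ℕ, q.coeff d
        = (∑ x ∈ E', if (v x : ℕ) + 1 = d then (1 : K) else 0)
          + (if (v X : ℕ) + 1 = d then (1 : K) else 0) := by
      intro d
      simp only [hq, Polynomial.coeff_add, Polynomial.finset_sum_coeff,
        Polynomial.coeff_X_pow]
      congr 1
      · exact Finset.sum_congr rfl fun x _ => if_congr eq_comm rfl rfl
      · exact if_congr eq_comm rfl rfl
    have hq0 : q ≠ 0 := by
      by_cases hXE : X ∈ E'
      · obtain ⟨x₀, hx₀, hne⟩ := Finset.exists_mem_ne hE' X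
        intro h0
        have h1 : q.coeff ((v x₀ : ℕ) + 1) = 1 := by
          rw [hcoeff]
          have hsum : (∑ x ∈ E', if (v x : ℕ) + 1 = (v x₀ : ℕ) + 1 then (1 : K) else 0)
              = 1 := by
            rw [Finset.sum_congr rfl fun x _ => if_congr (hvkey x₀ x) rfl rfl,
              Finset.sum_ite_eq' E' x₀ (fun _ => (1 : K))]
            simp [hx₀]
          rw [hsum]
          have : ¬ ((v X : ℕ) + 1 = (v x₀ : ℕ) + 1) := by
            rw [hvkey x₀ X]
            exact fun hh => hne hh.symm
          rw [if_neg this, add_zero]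
        rw [h0, Polynomial.coeff_zero] at h1
        exact one_ne_zero h1.symm
      · intro h0
        have h1 : q.coeff ((v X : ℕ) + 1) = 1 := by
          rw [hcoeff]
          have hsum : (∑ x ∈ E', if (v x : ℕ) + 1 = (v X : ℕ) + 1 then (1 : K) else 0)
              = 0 := by
            rw [Finset.sum_congr rfl fun x _ => if_congr (hvkey X x) rfl rfl,
              Finset.sum_ite_eq' E' X (fun _ => (1 : K))]
            simp [hXE]
          rw [hsum, if_pos rfl, zero_add]
        rw [h0, Polynomial.coeff_zero] at h1
        exact one_ne_zero h1.symm
    have hpow : ∀ x : Fin m → ZMod 2,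
        ((Polynomial.X : K[X]) ^ ((v x : ℕ) + 1)).natDegree ≤ 2 ^ m := by
      intro x
      rw [Polynomial.natDegree_X_pow]
      have := (v x).isLt
      omega
    have hdeg : q.natDegree ≤ 2 ^ m := by
      refine le_trans (Polynomial.natDegree_add_le _ _) (max_le ?_ (hpow X))
      refine le_trans (Polynomial.natDegree_sum_le _ _) ?_
      exact (Finset.fold_max_le _).2 ⟨Nat.zero_le _, fun x _ => hpow x⟩
    set R : Finset K := q.roots.toFinset with hR
    have hRcard : R.card ≤ 2 ^ m :=
      le_trans (Multiset.toFinset_card_le _) (le_trans (Polynomial.card_roots' q) hdeg)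
    -- bad set description
    have hsub : {s : Fin w → ZMod 2 | single s (∑ x ∈ E', uid s x) ≠ none}
        ⊆ ⇑e ⁻¹' ((Set.univ : Set (Fin m → ZMod 2)) ×ˢ (↑R : Set K)) := by
      intro s hs
      simp only [Set.mem_setOf_eq, single, ne_eq, ite_eq_right_iff, not_forall] at hs
      obtain ⟨hcond, -⟩ := hs
      have hsum : e (∑ x ∈ E', uid s x) = (X, ∑ x ∈ E', t s ^ ((v x : ℕ) + 1)) := by
        rw [map_sum]
        simp only [uid, LinearEquiv.apply_symm_apply]
        rw [Prod.ext_iff, Prod.fst_sum, Prod.snd_sum]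
        constructor
        · simp [hX]
        · simp
      rw [hsum] at hcond
      simp only at hcond
      -- hcond : ∑ x ∈ E', t s ^ (v x + 1) = t s ^ (v X + 1)
      have hroot : q.eval (t s) = 0 := by
        simp only [hq, Polynomial.eval_add, Polynomial.eval_finset_sum, Polynomial.eval_pow,
          Polynomial.eval_X]
        rw [hcond]
        exact CharTwo.add_self_eq_zero _
      simp only [Set.mem_preimage, Set.mem_prod, Set.mem_univ, true_and, Finset.coe_sort_coe,
        Finset.mem_coe, hR, Multiset.mem_toFinset]
      exact (Polynomial.mem_roots hq0).2 hroot
    have hrange : ((Set.univ : Set (Fin m → ZMod 2)) ×ˢ (↑R : Set K)) ⊆ Set.range ⇑e :=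
      fun y _ => ⟨e.symm y, by simp⟩
    calc {s : Fin w → ZMod 2 | single s (∑ x ∈ E', uid s x) ≠ none}.ncard
        ≤ (⇑e ⁻¹' ((Set.univ : Set (Fin m → ZMod 2)) ×ˢ (↑R : Set K))).ncard :=
          Set.ncard_le_ncard hsub (Set.toFinite _)
      _ = ((Set.univ : Set (Fin m → ZMod 2)) ×ˢ (↑R : Set K)).ncard :=
          Set.ncard_preimage_of_injective_subset_range e.injective hrange
      _ = 2 ^ m * R.card := by
          rw [Set.ncard_eq_toFinset_card', Set.toFinset_prod, Set.toFinset_univ,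
            Finset.toFinset_coe, Finset.card_product, Finset.card_univ, hcard]
      _ ≤ 2 ^ m * 2 ^ m := Nat.mul_le_mul_left _ hRcard
      _ = 4 ^ m := by rw [← Nat.mul_pow]

/-- A singleton-detection scheme with `O(log n)`-bit seeds:
bit-vectors are modelled as vectors over `𝔽₂ = ZMod 2`, where addition is
bitwise XOR. -/
theorem stmt_17 :
    ∀ c : ℝ, 1 ≤ c → ∃ C : ℝ, 0 < C ∧
      ∀ n : ℕ, 2 ≤ n → ∀ w m : ℕ,
        w = ⌈C * Real.logb 2 n⌉₊ → m = 2 * ⌈Real.logb 2 n⌉₊ →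
        ∃ (uid : (Fin w → ZMod 2) → (Fin m → ZMod 2) → (Fin w → ZMod 2))
          (recov : (Fin w → ZMod 2) → (Fin m → ZMod 2))
          (single : (Fin w → ZMod 2) → (Fin w → ZMod 2) →
            Option (Fin w → ZMod 2)),
          (∀ s x, recov (uid s x) = x) ∧
          (∀ s x, single s (uid s x) = some (uid s x)) ∧
          (∀ E' : Finset (Fin m → ZMod 2), 1 < E'.card →
            (({s : Fin w → ZMod 2 |
                  single s (∑ x ∈ E', uid s x) ≠ none}.ncard : ℝ) /
                (Fintype.card (Fin w → ZMod 2) : ℝ)) ≤ (n : ℝ) ^ (-c)) := by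
  intro c hc
  refine ⟨c + 10, by linarith, ?_⟩
  intro n hn w m hw hm
  set ℓ : ℝ := Real.logb 2 n with hℓdef
  have hn0 : (0:ℝ) < n := by positivity
  have hn2 : (2:ℝ) ≤ n := by exact_mod_cast hn
  have hℓ1 : 1 ≤ ℓ := by
    rw [hℓdef]
    exact (Real.le_logb_iff_rpow_le (by norm_num) hn0).2
      (by rw [Real.rpow_one]; exact hn2)
  have h2ℓ : (2:ℝ) ^ ℓ = n := Real.rpow_logb (by norm_num) (by norm_num) hn0
  have hLceil : (⌈ℓ⌉₊ : ℝ) < ℓ + 1 := Nat.ceil_lt_add_one (by linarith)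
  have hmℝ : (m:ℝ) ≤ 2*ℓ + 2 := by
    rw [hm]; push_cast; linarith
  have hwℝ : (c + 10) * ℓ ≤ (w:ℝ) := by rw [hw]; exact Nat.le_ceil _
  have hmw : m < w := by
    have : (m:ℝ) < (w:ℝ) := by nlinarith
    exact_mod_cast this
  obtain ⟨uid, recov, single, h1, h2, h3⟩ := scheme m w hmw
  refine ⟨uid, recov, single, h1, h2, ?_⟩
  intro E' hE'
  have hcount := h3 E' hE'
  have hcardw : (Fintype.card (Fin w → ZMod 2) : ℝ) = 2 ^ w := by
    simp [Fintype.card_fun]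
  -- key real inequality : 4^m * n^c ≤ 2^w
  have key : (4:ℝ) ^ m * (n:ℝ) ^ c ≤ (2:ℝ) ^ w := by
    have e1 : (4:ℝ) ^ m = (2:ℝ) ^ ((2*m : ℕ) : ℝ) := by
      rw [Real.rpow_natCast]
      rw [pow_mul]
      norm_num
    have e2 : (2:ℝ) ^ ((2*m : ℕ) : ℝ) ≤ (2:ℝ) ^ (4*ℓ + 4) := by
      apply Real.rpow_le_rpow_of_exponent_le (by norm_num)
      push_cast; linarith
    have e3 : (2:ℝ) ^ (4*ℓ + 4) = (n:ℝ) ^ (4:ℝ) * 16 := by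
      rw [Real.rpow_add (by norm_num), show (4:ℝ)*ℓ = ℓ*4 by ring,
        Real.rpow_mul (by norm_num), h2ℓ]
      norm_num
    have e4 : (n:ℝ) ^ ((c:ℝ) + 10) ≤ (2:ℝ) ^ (w:ℝ) := by
      calc (n:ℝ) ^ ((c:ℝ) + 10) = ((2:ℝ) ^ ℓ) ^ ((c:ℝ) + 10) := by rw [h2ℓ]
        _ = (2:ℝ) ^ (ℓ * (c + 10)) := by rw [← Real.rpow_mul (by norm_num)]
        _ ≤ (2:ℝ) ^ (w:ℝ) := by
            apply Real.rpow_le_rpow_of_exponent_le (by norm_num)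
            linarith
    have e5 : (n:ℝ) ^ (4:ℝ) * 16 * (n:ℝ) ^ c ≤ (n:ℝ) ^ ((c:ℝ) + 10) := by
      rw [Real.rpow_add hn0]
      have h6 : (n:ℝ) ^ (4:ℝ) * 16 ≤ (n:ℝ) ^ (10:ℝ) := by
        have hp : ∀ j : ℕ, (n:ℝ) ^ ((j:ℕ) : ℝ) = (n:ℝ) ^ (j:ℕ) := fun j =>
          Real.rpow_natCast _ _
        rw [show ((4:ℝ)) = ((4:ℕ):ℝ) by norm_num, show ((10:ℝ)) = ((10:ℕ):ℝ) by norm_num,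
          hp, hp]
        have h26 : (64:ℝ) ≤ (n:ℝ)^6 := by
          calc (64:ℝ) = 2^6 := by norm_num
            _ ≤ (n:ℝ)^6 := pow_le_pow_left₀ (by norm_num) hn2 6
        calc (n:ℝ)^4 * 16 ≤ (n:ℝ)^4 * (n:ℝ)^6 := by
              nlinarith [pow_nonneg hn0.le 4, h26]
          _ = (n:ℝ)^10 := by ring
      have hcpos : (0:ℝ) < (n:ℝ) ^ c := Real.rpow_pos_of_pos hn0 _
      calc (n:ℝ) ^ (4:ℝ) * 16 * (n:ℝ) ^ c ≤ (n:ℝ) ^ (10:ℝ) * (n:ℝ) ^ c := by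
            apply mul_le_mul_of_nonneg_right h6 hcpos.le
        _ = (n:ℝ) ^ c * (n:ℝ) ^ (10:ℝ) := by ring
    calc (4:ℝ) ^ m * (n:ℝ) ^ c ≤ (2:ℝ) ^ (4*ℓ + 4) * (n:ℝ) ^ c := by
          rw [e1]; exact mul_le_mul_of_nonneg_right e2 (Real.rpow_pos_of_pos hn0 _).le
      _ = (n:ℝ) ^ (4:ℝ) * 16 * (n:ℝ) ^ c := by rw [e3]
      _ ≤ (n:ℝ) ^ ((c:ℝ) + 10) := e5
      _ ≤ (2:ℝ) ^ (w:ℝ) := e4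
      _ = (2:ℝ) ^ w := by rw [Real.rpow_natCast]
  rw [hcardw, div_le_iff₀ (by positivity), Real.rpow_neg hn0.le]
  have hcpos : (0:ℝ) < (n:ℝ) ^ c := Real.rpow_pos_of_pos hn0 _
  rw [inv_mul_eq_div, le_div_iff₀ hcpos]
  calc ({s : Fin w → ZMod 2 | single s (∑ x ∈ E', uid s x) ≠ none}.ncard : ℝ) * (n:ℝ)^c
      ≤ (4:ℝ)^m * (n:ℝ)^c := by
        apply mul_le_mul_of_nonneg_right _ hcpos.le
        exact_mod_cast hcount
    _ ≤ (2:ℝ)^w := key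
end

section
/- Let V be a finite set with |V| = n ≥ 2, let f ≥ 2 be an integer, let c > 0 be a real number, let F ⊆ V with |F| ≤ f, and let N₁, …, N_k ⊆ V be sets with k ≤ n and |N_j| ≥ c·f·ln n for every j ∈ {1,…,k}. Let S ⊆ V be a random subset formed by including each element of V independently with probability 1/f. Then the probability that S ∩ F = ∅ and simultaneously S ∩ N_j ≠ ∅ for every j ∈ {1,…,k} is at least 1/4 − n^{1−c}. -/
/-!
Avoiding `F` and hitting each `N j` are estimated separately and combined by a union bound.
The set `S` avoids `F` with probability `(1 - 1/f) ^ |F| ≥ (1 - 1/f) ^ f ≥ 1/4`, the last step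
being Bernoulli's inequality `(1/2) ^ (2/f) ≤ 1 - 1/f` for the exponent `2/f ≤ 1`. It misses a
set `N j` with probability `(1 - 1/f) ^ |N j| ≤ exp (-|N j| / f) ≤ n ^ (-c)`, so all `k ≤ n`
misses together have probability at most `n ^ (1 - c)`.
-/

open Finset Real

lemma sum_filter_and_forall_ge {α ι : Type*} [Fintype ι] (s : Finset α) (p : α → ℝ)
    (hp : ∀ a ∈ s, 0 ≤ p a) (P : α → Prop) (Q : ι → α → Prop)
    [DecidablePred P] [∀ i, DecidablePred (Q i)] :
    ∑ a ∈ s.filter P, p a - ∑ i, ∑ a ∈ s.filter (fun a => ¬ Q i a), p a ≤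
      ∑ a ∈ s.filter (fun a => P a ∧ ∀ i, Q i a), p a := by
  simp only [sum_filter]
  rw [sum_comm, ← sum_sub_distrib]
  refine sum_le_sum fun a ha => ?_
  have hmiss_nonneg : 0 ≤ ∑ i, if ¬ Q i a then p a else 0 :=
    sum_nonneg fun i _ => by split_ifs <;> simp [hp a ha]
  by_cases hgood : P a ∧ ∀ i, Q i a
  · simp [hgood]
  · rw [if_neg hgood]
    by_cases hP : P a
    · obtain ⟨i, hi⟩ := not_forall.1 fun hQ => hgood ⟨hP, hQ⟩
      have := single_le_sum (f := fun i => if ¬ Q i a then p a else 0)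
        (fun i _ => by split_ifs <;> simp [hp a ha]) (mem_univ i)
      simp only [hP, hi, if_true, not_false_eq_true] at this ⊢
      linarith
    · simp only [hP, if_false]
      linarith

lemma one_sub_inv_pow_le_rpow_neg {f m : ℕ} (hf : 0 < f) {n c : ℝ} (hn : 0 < n)
    (hm : c * f * log n ≤ m) : (1 - 1 / (f : ℝ)) ^ m ≤ n ^ (-c) := by
  have hf' : (1 : ℝ) ≤ f := by exact_mod_cast hf
  calc (1 - 1 / (f : ℝ)) ^ m ≤ exp (-(1 / f)) ^ m :=
        pow_le_pow_left₀ (by rw [sub_nonneg]; exact div_le_one_of_le₀ hf' (by positivity))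
          (one_sub_le_exp_neg _) m
    _ = exp (-(m / f)) := by rw [← exp_nat_mul]; ring_nf
    _ ≤ exp (-c * log n) := by
        rw [exp_le_exp, neg_mul, neg_le_neg_iff, le_div_iff₀ (by positivity)]
        linarith
    _ = n ^ (-c) := by rw [rpow_def_of_pos hn, mul_comm]

lemma quarter_le_one_sub_inv_pow_self {f : ℕ} (hf : 2 ≤ f) : 1 / 4 ≤ (1 - 1 / (f : ℝ)) ^ f := by
  have hf' : (2 : ℝ) ≤ f := by exact_mod_cast hf
  have hbernoulli : (1 / 2 : ℝ) ^ ((2 : ℝ) / f) ≤ 1 - 1 / f := by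
    have := rpow_one_add_le_one_add_mul_self (s := -1 / 2) (p := 2 / f) (by norm_num)
      (by positivity) (div_le_one_of_le₀ hf' (by positivity))
    convert this using 1 <;> [norm_num; ring]
  calc (1 / 4 : ℝ) = ((1 / 2 : ℝ) ^ ((2 : ℝ) / f)) ^ f := by
        rw [← rpow_natCast, ← rpow_mul (by norm_num), div_mul_cancel₀ _ (by positivity)]
        norm_num
    _ ≤ (1 - 1 / (f : ℝ)) ^ f := pow_le_pow_left₀ (by positivity) hbernoulli f

section BernoulliSubset

variable {V : Type*} [Fintype V]

noncomputable def bernoulliWeight (x : ℝ) (S : Finset V) : ℝ :=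
  x ^ #S * (1 - x) ^ (Fintype.card V - #S)

lemma bernoulliWeight_nonneg {x : ℝ} (hx0 : 0 ≤ x) (hx1 : x ≤ 1) (S : Finset V) :
    0 ≤ bernoulliWeight x S := by
  have : 0 ≤ 1 - x := by linarith
  unfold bernoulliWeight
  positivity

lemma sum_bernoulliWeight_filter_inter_eq_empty [DecidableEq V] (x : ℝ) (A : Finset V) :
    ∑ S ∈ univ.filter (fun S => S ∩ A = ∅), bernoulliWeight x S = (1 - x) ^ #A := by
  have hfilter : univ.filter (fun S : Finset V => S ∩ A = ∅) = Aᶜ.powerset := by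
    ext S
    simp [subset_compl_iff_disjoint_right, disjoint_iff_inter_eq_empty]
  have hweight : ∀ S ∈ Aᶜ.powerset,
      bernoulliWeight x S = x ^ #S * (1 - x) ^ (#Aᶜ - #S) * (1 - x) ^ #A := by
    intro S hS
    have hS := card_le_card (mem_powerset.1 hS)
    have hA := card_le_univ A
    rw [card_compl] at hS ⊢
    rw [bernoulliWeight, mul_assoc, ← pow_add]
    congr 2
    omega
  rw [hfilter, sum_congr rfl hweight, ← sum_mul, sum_pow_mul_eq_add_pow]
  simp

end BernoulliSubset

theorem stmt_19_general (V : Type) [Fintype V] [DecidableEq V]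
    (n : ℕ) (hn : Fintype.card V = n) (h2 : 2 ≤ n)
    (f : ℕ) (hf : 2 ≤ f) (c : ℝ)
    (F : Finset V) (hF : F.card ≤ f)
    (k : ℕ) (hk : k ≤ n) (N : Fin k → Finset V)
    (hN : ∀ j, c * (f : ℝ) * Real.log n ≤ ((N j).card : ℝ)) :
    (1 : ℝ) / 4 - (n : ℝ) ^ ((1 : ℝ) - c) ≤
      ∑ S ∈ Finset.univ.filter (fun S : Finset V =>
          S ∩ F = ∅ ∧ ∀ j, (S ∩ N j).Nonempty),
        (1 / (f : ℝ)) ^ S.card * (1 - 1 / (f : ℝ)) ^ (n - S.card) := by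
  subst hn
  set x : ℝ := 1 / f
  have hx0 : 0 ≤ x := by positivity
  have hx1 : x ≤ 1 := div_le_one_of_le₀ (by exact_mod_cast (by omega : 1 ≤ f)) (by positivity)
  have hn : (0 : ℝ) < Fintype.card V := by exact_mod_cast (by omega : 0 < Fintype.card V)
  have havoid : 1 / 4 ≤ ∑ S ∈ univ.filter (fun S => S ∩ F = ∅), bernoulliWeight x S := by
    rw [sum_bernoulliWeight_filter_inter_eq_empty]
    exact (quarter_le_one_sub_inv_pow_self hf).trans
      (pow_le_pow_of_le_one (by linarith) (by linarith) hF)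
  have hmiss : ∑ j, ∑ S ∈ univ.filter (fun S => ¬ (S ∩ N j).Nonempty), bernoulliWeight x S ≤
      (Fintype.card V : ℝ) ^ (1 - c) :=
    calc _ = ∑ j, (1 - x) ^ #(N j) := by
          simp only [not_nonempty_iff_eq_empty, sum_bernoulliWeight_filter_inter_eq_empty]
      _ ≤ ∑ _j : Fin k, (Fintype.card V : ℝ) ^ (-c) :=
          sum_le_sum fun j _ => one_sub_inv_pow_le_rpow_neg (by omega) hn (hN j)
      _ ≤ Fintype.card V * (Fintype.card V : ℝ) ^ (-c) := by
          rw [sum_const, card_univ, Fintype.card_fin, nsmul_eq_mul]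
          gcongr
      _ = (Fintype.card V : ℝ) ^ (1 - c) := by rw [sub_eq_add_neg, rpow_add hn, rpow_one]
  have hunion := sum_filter_and_forall_ge univ (bernoulliWeight x)
    (fun S _ => bernoulliWeight_nonneg hx0 hx1 S) (fun S => S ∩ F = ∅)
    (fun j S => (S ∩ N j).Nonempty)
  change _ ≤ ∑ S ∈ _, bernoulliWeight x S
  calc _ ≤ _ := by linarith
    _ ≤ _ := hunion
    _ = _ := by congr -- the two filters differ only in their `Decidable` instances

/-- A random subset `S ⊆ V` including each vertex
independently with probability `1/f` (the probability of an event is the sum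
of `(1/f)^{|S|}·(1 − 1/f)^{n−|S|}` over the sets `S` in the event) avoids a
fault set `F` of size at most `f` and hits every set `N_j` of size at least
`c·f·ln n` with probability at least `1/4 − n^{1−c}`. -/
theorem stmt_19 (V : Type) [Fintype V] [DecidableEq V]
    (n : ℕ) (hn : Fintype.card V = n) (h2 : 2 ≤ n)
    (f : ℕ) (hf : 2 ≤ f) (c : ℝ) (hc : 0 < c)
    (F : Finset V) (hF : F.card ≤ f)
    (k : ℕ) (hk : k ≤ n) (N : Fin k → Finset V)
    (hN : ∀ j, c * (f : ℝ) * Real.log n ≤ ((N j).card : ℝ)) :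
    (1 : ℝ) / 4 - (n : ℝ) ^ ((1 : ℝ) - c) ≤
      ∑ S ∈ Finset.univ.filter (fun S : Finset V =>
          S ∩ F = ∅ ∧ ∀ j, (S ∩ N j).Nonempty),
        (1 / (f : ℝ)) ^ S.card * (1 - 1 / (f : ℝ)) ^ (n - S.card) :=
  stmt_19_general V n hn h2 f hf c F hF k hk N hN
end
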